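/- arXiv:1007.1547 — 8 statements merged into one kernel-verified Lean document; each statement's English description precedes it below -/
import Mathlib

section
/- The number of ordered rooted forests with n vertices (rooted forests whose vertex set is {1,...,n}, i.e. rooted forests equipped with a total order on their vertices) equals (n+1)^(n-1). -/
open scoped Classical

/-- One step of the child-to-parent relation of a parent map. -/
def ParentRel {n : ℕ} (p : Fin n → Option (Fin n)) (a b : Fin n) : Prop :=
  p a = some b

/-- A parent map on `Fin n` is a rooted forest when the parent relation has no
(oriented) cycles. -/
def IsForest {n : ℕ} (p : Fin n → Option (Fin n)) : Prop :=
  ∀ v, ¬ Relation.TransGen (ParentRel p) v v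

namespace CayleyAux

variable {n : ℕ}

/-- one step on `Option (Fin n)` -/
def st (p : Fin n → Option (Fin n)) (o : Option (Fin n)) : Option (Fin n) := o.bind p

@[simp] lemma st_none (p : Fin n → Option (Fin n)) : st p none = none := rfl
@[simp] lemma st_some (p : Fin n → Option (Fin n)) (v : Fin n) : st p (some v) = p v := rfl

lemma st_iter_none (p : Fin n → Option (Fin n)) (k : ℕ) : (st p)^[k] none = none :=
  Function.iterate_fixed rfl k

lemma join_map_some {α : Type*} (o : Option α) : (o.map some).join = o := by
  cases o <;> rfl

lemma join_eq_some {α : Type*} {o : Option (Option α)} {a : α} (h : o.join = some a) :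
    o = some (some a) := by
  rcases o with _ | x
  · simp at h
  · exact congrArg some h

/-- `indexOf` with a pinned `BEq` instance coming from `DecidableEq`. -/
def idx {α : Type*} [DecidableEq α] (a : α) (l : List α) : ℕ := List.idxOf a l

lemma indexOf_eq_of_get? {α : Type*} [DecidableEq α] {l : List α} (hl : l.Nodup) {i : ℕ} {a : α}
    (h : l[i]? = some a) : idx a l = i := by
  rw [List.getElem?_eq_some_iff] at h
  obtain ⟨hlen, hget⟩ := h
  have hmem : a ∈ l := hget ▸ l.get_mem _
  have h2 := List.get_idxOf hl ⟨i, hlen⟩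
  have h3 : l.get ⟨List.idxOf a l, List.idxOf_lt_length_iff.2 hmem⟩ = a := List.idxOf_get _
  have := List.nodup_iff_injective_get.1 hl (a₁ := ⟨List.idxOf a l, List.idxOf_lt_length_iff.2 hmem⟩)
    (a₂ := ⟨i, hlen⟩) (by rw [h3]; exact hget.symm)
  exact congrArg Fin.val this

lemma get?_indexOf {α : Type*} [DecidableEq α] {l : List α} {a : α} (h : a ∈ l) :
    l[idx a l]? = some a := by
  rw [List.getElem?_eq_some_iff]
  exact ⟨List.idxOf_lt_length_iff.2 h, List.idxOf_get _⟩

lemma transGen_iff (p : Fin n → Option (Fin n)) (v w : Fin n) :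
    Relation.TransGen (ParentRel p) v w ↔ ∃ k, (st p)^[k+1] (some v) = some w := by
  constructor
  · intro h
    induction h with
    | single h => exact ⟨0, h⟩
    | tail _ h ih =>
      obtain ⟨k, hk⟩ := ih
      refine ⟨k+1, ?_⟩
      rw [Function.iterate_succ_apply', hk]
      exact h
  · rintro ⟨k, hk⟩
    induction k generalizing w with
    | zero => exact Relation.TransGen.single hk
    | succ k ih =>
      rw [Function.iterate_succ_apply'] at hk
      rcases h : (st p)^[k+1] (some v) with _ | b
      · rw [h] at hk; simp at hk
      · rw [h] at hk
        exact Relation.TransGen.tail (ih b h) hk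

lemma isForest_iff (p : Fin n → Option (Fin n)) :
    IsForest p ↔ ∀ v k, (st p)^[k+1] (some v) ≠ some v := by
  unfold IsForest
  simp only [transGen_iff]
  tauto

lemma no_repeat {p : Fin n → Option (Fin n)} (hp : IsForest p) (m : Option (Fin n))
    {i j : ℕ} {v : Fin n} (hij : i < j)
    (hi : (st p)^[i] m = some v) (hj : (st p)^[j] m = some v) : False := by
  obtain ⟨d, rfl⟩ : ∃ d, j = (d + 1) + i := ⟨j - i - 1, by omega⟩
  rw [Function.iterate_add_apply, hi] at hj
  exact (isForest_iff p).1 hp v d hj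

lemma allsome {g : Fin n → Option (Fin n)} {K : ℕ} {x : Option (Fin n)} {v : Fin n}
    (hK : (st g)^[K] x = some v) {j : ℕ} (hj : j ≤ K) : ∃ w, (st g)^[j] x = some w := by
  rcases h : (st g)^[j] x with _ | w
  · exfalso
    obtain ⟨d, rfl⟩ : ∃ d, K = d + j := ⟨K - j, by omega⟩
    rw [Function.iterate_add_apply, h, st_iter_none] at hK
    simp at hK
  · exact ⟨w, rfl⟩

lemma rot {g : Fin n → Option (Fin n)} {a j : ℕ} {x y : Option (Fin n)}
    (hx : (st g)^[a] x = x) (hy : (st g)^[j] x = y) : (st g)^[a] y = y := by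
  subst hy
  rw [← Function.iterate_add_apply, add_comm, Function.iterate_add_apply, hx]

lemma traj_congr {g g' : Fin n → Option (Fin n)} {k : ℕ} {x : Option (Fin n)}
    (h : ∀ j ≤ k, ∀ w, (st g)^[j] x = some w → g w = g' w) :
    ∀ j ≤ k + 1, (st g')^[j] x = (st g)^[j] x := by
  intro j hj
  induction j with
  | zero => rfl
  | succ j ih =>
    rw [Function.iterate_succ_apply', Function.iterate_succ_apply',
      ih (by omega)]
    rcases hw : (st g)^[j] x with _ | w
    · rfl
    · simp only [st_some]
      exact (h j (by omega) w hw).symm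

lemma reach_none {p : Fin n → Option (Fin n)} (hp : IsForest p) (m : Option (Fin n)) :
    (st p)^[n] m = none := by
  by_contra h
  have hall : ∀ k ≤ n, ∃ w, (st p)^[k] m = some w := by
    intro k hk
    rcases hw : (st p)^[n] m with _ | w
    · exact absurd hw h
    · exact allsome hw hk
  choose g hg using hall
  have hinj : Function.Injective (fun k : Fin (n+1) => g k.1 (by omega)) := by
    intro a b hab
    simp only at hab
    have ha := hg a.1 (by omega)
    have hb := hg b.1 (by omega)
    rw [hab] at ha
    rcases lt_trichotomy a.1 b.1 with h' | h' | h'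
    · exact absurd (no_repeat hp m h' ha hb) not_false
    · exact Fin.ext h'
    · exact absurd (no_repeat hp m h' hb ha) not_false
  have := Fintype.card_le_of_injective _ hinj
  simp at this


/-! ### Path lists -/

def pathAux (p : Fin n → Option (Fin n)) : ℕ → Option (Fin n) → List (Fin n)
  | 0, _ => []
  | _+1, none => []
  | k+1, some v => v :: pathAux p k (p v)

lemma pathAux_get? (p : Fin n → Option (Fin n)) :
    ∀ (fuel : ℕ) (m : Option (Fin n)), (st p)^[fuel] m = none →
      ∀ k, (pathAux p fuel m)[k]? = (st p)^[k] m := by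
  intro fuel
  induction fuel with
  | zero =>
    intro m hm k
    simp only [Function.iterate_zero, id] at hm
    subst hm
    rw [st_iter_none]
    simp [pathAux]
  | succ fuel ih =>
    intro m hm k
    match m with
    | none =>
      rw [st_iter_none]
      simp [pathAux]
    | some v =>
      rw [Function.iterate_succ_apply] at hm
      match k with
      | 0 => simp [pathAux]
      | k+1 =>
        rw [Function.iterate_succ_apply]
        exact ih (p v) hm k

def pathList (p : Fin n → Option (Fin n)) (m : Option (Fin n)) : List (Fin n) :=
  pathAux p n m

lemma pathList_get? {p : Fin n → Option (Fin n)} (hp : IsForest p) (m : Option (Fin n))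
    (k : ℕ) : (pathList p m)[k]? = (st p)^[k] m :=
  pathAux_get? p n m (reach_none hp m) k

lemma mem_pathList {p : Fin n → Option (Fin n)} (hp : IsForest p) {m : Option (Fin n)}
    {v : Fin n} : v ∈ pathList p m ↔ ∃ k, (st p)^[k] m = some v := by
  rw [List.mem_iff_getElem?]
  simp only [pathList_get? hp]

lemma pathList_nodup {p : Fin n → Option (Fin n)} (hp : IsForest p) (m : Option (Fin n)) :
    (pathList p m).Nodup := by
  rw [List.nodup_iff_injective_get]
  intro a b hab
  have ha : (pathList p m)[a.1]? = some ((pathList p m).get a) :=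
    List.getElem?_eq_some_iff.2 ⟨a.2, rfl⟩
  have hb : (pathList p m)[b.1]? = some ((pathList p m).get b) :=
    List.getElem?_eq_some_iff.2 ⟨b.2, rfl⟩
  rw [pathList_get? hp] at ha hb
  rw [hab] at ha
  rcases lt_trichotomy a.1 b.1 with h' | h' | h'
  · exact absurd (no_repeat hp m h' ha hb) not_false
  · exact Fin.ext h'
  · exact absurd (no_repeat hp m h' hb ha) not_false

/-! ### The cyclic set of an arbitrary function -/

noncomputable def Cyc (f : Fin n → Option (Fin n)) : Finset (Fin n) :=
  Finset.univ.filter (fun v => ∃ k, (st f)^[k+1] (some v) = some v)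

lemma mem_Cyc {f : Fin n → Option (Fin n)} {v : Fin n} :
    v ∈ Cyc f ↔ ∃ k, (st f)^[k+1] (some v) = some v := by
  simp only [Cyc, Finset.mem_filter, Finset.mem_univ, true_and]

lemma cyc_step {f : Fin n → Option (Fin n)} {v : Fin n} (hv : v ∈ Cyc f) :
    ∃ w ∈ Cyc f, f v = some w := by
  obtain ⟨k, hk⟩ := mem_Cyc.1 hv
  rcases hw : f v with _ | w
  · exfalso
    rw [Function.iterate_succ_apply] at hk
    simp only [st_some, hw] at hk
    rw [st_iter_none] at hk
    simp at hk
  · refine ⟨w, mem_Cyc.2 ⟨k, ?_⟩, rfl⟩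
    have h1 : (st f) (some v) = some w := by simp [hw]
    calc (st f)^[k+1] (some w) = (st f)^[k+1] ((st f) (some v)) := by rw [h1]
      _ = (st f) ((st f)^[k+1] (some v)) := by
          rw [← Function.iterate_succ_apply, Function.iterate_succ_apply']
      _ = (st f) (some v) := by rw [hk]
      _ = some w := h1

lemma cyc_inj {f : Fin n → Option (Fin n)} {v w : Fin n} (hv : v ∈ Cyc f) (hw : w ∈ Cyc f)
    (h : f v = f w) : v = w := by
  obtain ⟨a, ha⟩ := mem_Cyc.1 hv
  obtain ⟨b, hb⟩ := mem_Cyc.1 hw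
  have hNv : (st f)^[(a+1)*(b+1)] (some v) = some v := by
    rw [Function.iterate_mul]
    exact Function.iterate_fixed ha (b+1)
  have hNw : (st f)^[(a+1)*(b+1)] (some w) = some w := by
    rw [mul_comm, Function.iterate_mul]
    exact Function.iterate_fixed hb (a+1)
  have h1 : 1 ≤ (a+1)*(b+1) := Nat.mul_pos (by omega) (by omega)
  have hN : (a+1)*(b+1) = ((a+1)*(b+1) - 1) + 1 := by omega
  have key : (some v : Option (Fin n)) = some w := by
    calc some v = (st f)^[(a+1)*(b+1)] (some v) := hNv.symm
      _ = (st f)^[((a+1)*(b+1)-1)+1] (some v) := by rw [← hN]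
      _ = (st f)^[(a+1)*(b+1)-1] (st f (some v)) := Function.iterate_succ_apply ..
      _ = (st f)^[(a+1)*(b+1)-1] (st f (some w)) := by rw [st_some, st_some, h]
      _ = (st f)^[((a+1)*(b+1)-1)+1] (some w) := (Function.iterate_succ_apply ..).symm
      _ = some w := by rw [← hN, hNw]
  exact Option.some_injective _ key

lemma cyc_surj {f : Fin n → Option (Fin n)} {w : Fin n} (hw : w ∈ Cyc f) :
    ∃ v ∈ Cyc f, f v = some w := by
  have hmaps : ∀ (a : Fin n) (ha : a ∈ Cyc f), Classical.choose (cyc_step ha) ∈ Cyc f :=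
    fun a ha => (Classical.choose_spec (cyc_step ha)).1
  have hspec : ∀ (a : Fin n) (ha : a ∈ Cyc f), f a = some (Classical.choose (cyc_step ha)) :=
    fun a ha => (Classical.choose_spec (cyc_step ha)).2
  have hinj : ∀ (a₁ a₂ : Fin n) (h₁ : a₁ ∈ Cyc f) (h₂ : a₂ ∈ Cyc f),
      Classical.choose (cyc_step h₁) = Classical.choose (cyc_step h₂) → a₁ = a₂ := by
    intro a₁ a₂ h₁ h₂ h
    apply cyc_inj h₁ h₂
    rw [hspec a₁ h₁, hspec a₂ h₂, h]
  obtain ⟨v, hv, hvw⟩ := Finset.surj_on_of_inj_on_of_card_le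
    (fun a ha => Classical.choose (cyc_step ha)) hmaps hinj le_rfl w hw
  exact ⟨v, hv, by rw [hspec v hv, ← hvw]⟩

/-! ### The inverse construction -/

noncomputable def pthT (f : Fin n → Option (Fin n)) : List (Fin n) :=
  (Cyc f).sort (· ≤ ·)

noncomputable def pthL (f : Fin n → Option (Fin n)) : List (Option (Fin n)) :=
  (pthT f).map f

lemma pthT_nodup (f : Fin n → Option (Fin n)) : (pthT f).Nodup :=
  Finset.sort_nodup _ _

lemma mem_pthT {f : Fin n → Option (Fin n)} {v : Fin n} : v ∈ pthT f ↔ v ∈ Cyc f :=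
  Finset.mem_sort _

lemma pthL_nodup (f : Fin n → Option (Fin n)) : (pthL f).Nodup :=
  List.Nodup.map_on
    (fun x hx y hy h => cyc_inj (mem_pthT.1 hx) (mem_pthT.1 hy) h)
    (pthT_nodup f)

lemma pthL_entry {f : Fin n → Option (Fin n)} {o : Option (Fin n)} (h : o ∈ pthL f) :
    ∃ u ∈ Cyc f, o = some u := by
  obtain ⟨w, hw, rfl⟩ := List.mem_map.1 h
  obtain ⟨u, hu, hfu⟩ := cyc_step (mem_pthT.1 hw)
  exact ⟨u, hu, hfu⟩

lemma some_mem_pthL {f : Fin n → Option (Fin n)} {u : Fin n} :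
    some u ∈ pthL f ↔ u ∈ Cyc f := by
  constructor
  · intro h
    obtain ⟨u', hu', h'⟩ := pthL_entry h
    rwa [Option.some_inj.1 h']
  · intro h
    obtain ⟨v, hv, hvu⟩ := cyc_surj h
    exact List.mem_map.2 ⟨v, mem_pthT.2 hv, hvu⟩

noncomputable def invp (f : Fin n → Option (Fin n)) : Fin n → Option (Fin n) :=
  fun v => if v ∈ Cyc f then ((pthL f)[idx (some v) (pthL f) + 1]?).join else f v

noncomputable def invm (f : Fin n → Option (Fin n)) : Option (Fin n) :=
  ((pthL f)[0]?).join

lemma invp_traj (f : Fin n → Option (Fin n)) (i : ℕ) :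
    ∀ j, (st (invp f))^[j] (((pthL f)[i]?).join) = ((pthL f)[i+j]?).join := by
  intro j
  induction j generalizing i with
  | zero => rfl
  | succ j ih =>
    rw [Function.iterate_succ_apply]
    rcases h : (pthL f)[i]? with _ | o
    · have hlen : (pthL f).length ≤ i := List.getElem?_eq_none_iff.1 h
      have h2 : (pthL f)[i + (j+1)]? = none := List.getElem?_eq_none_iff.2 (by omega)
      rw [h2]
      show (st (invp f))^[j] (st (invp f) none) = none
      rw [st_none, st_iter_none]
    · obtain ⟨u, hu, rfl⟩ := pthL_entry (List.mem_of_getElem? h)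
      have hidx : idx (some u) (pthL f) = i := indexOf_eq_of_get? (pthL_nodup f) h
      have hst : st (invp f) ((some (some u)).join) = ((pthL f)[i+1]?).join := by
        show st (invp f) (some u) = _
        rw [st_some]
        unfold invp
        rw [if_pos hu, hidx]
      rw [hst, ih (i+1)]
      have harith : i + 1 + j = i + (j+1) := by omega
      rw [harith]

lemma invm_traj (f : Fin n → Option (Fin n)) (j : ℕ) :
    (st (invp f))^[j] (invm f) = ((pthL f)[j]?).join := by
  have := invp_traj f 0 j
  rwa [Nat.zero_add] at this

theorem invp_forest (f : Fin n → Option (Fin n)) : IsForest (invp f) := by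
  rw [isForest_iff]
  intro v k hk
  by_cases hC : ∃ j ≤ k, ∃ u ∈ Cyc f, (st (invp f))^[j] (some v) = some u
  · obtain ⟨j, hj, u, hu, hju⟩ := hC
    have hcyc : (st (invp f))^[k+1] (some u) = some u := rot hk hju
    have humem : some u ∈ pthL f := some_mem_pthL.2 hu
    set i := idx (some u) (pthL f) with hi
    have hgi : (pthL f)[i]? = some (some u) := get?_indexOf humem
    have htr := invp_traj f i (k+1)
    rw [hgi] at htr
    have hj2 : ((some (some u) : Option (Option (Fin n)))).join = some u := rfl
    rw [hj2, hcyc] at htr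
    have : (pthL f)[i + (k+1)]? = some (some u) := join_eq_some htr.symm
    have h2 : idx (some u) (pthL f) = i + (k+1) :=
      indexOf_eq_of_get? (pthL_nodup f) this
    omega
  · push_neg at hC
    have hagree : ∀ j ≤ k, ∀ w, (st (invp f))^[j] (some v) = some w → invp f w = f w := by
      intro j hj w hw
      have hwC : w ∉ Cyc f := fun h => hC j hj w h hw
      unfold invp
      rw [if_neg hwC]
    have := traj_congr hagree (k+1) le_rfl
    rw [hk] at this
    have hvC : v ∈ Cyc f := mem_Cyc.2 ⟨k, this⟩
    exact hC 0 (by omega) v hvC rfl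

/-! ### The forward (Joyal) map -/

def srt (L : List (Fin n)) : List (Fin n) := L.toFinset.sort (· ≤ ·)

lemma srt_nodup (L : List (Fin n)) : (srt L).Nodup := Finset.sort_nodup _ _

lemma mem_srt {L : List (Fin n)} {v : Fin n} : v ∈ srt L ↔ v ∈ L := by
  rw [srt, Finset.mem_sort, List.mem_toFinset]

lemma length_srt {L : List (Fin n)} (hL : L.Nodup) : (srt L).length = L.length := by
  rw [srt, Finset.length_sort, List.toFinset_card_of_nodup hL]

def toFun (p : Fin n → Option (Fin n)) (m : Option (Fin n)) : Fin n → Option (Fin n) :=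
  fun v => if v ∈ pathList p m then
    (pathList p m)[idx v (srt (pathList p m))]? else p v

lemma toFun_of_mem {p : Fin n → Option (Fin n)} {m : Option (Fin n)} {v : Fin n}
    (hv : v ∈ pathList p m) :
    toFun p m v = (pathList p m)[idx v (srt (pathList p m))]? := if_pos hv

lemma toFun_of_not_mem {p : Fin n → Option (Fin n)} {m : Option (Fin n)} {v : Fin n}
    (hv : v ∉ pathList p m) : toFun p m v = p v := if_neg hv

lemma toFun_get {p : Fin n → Option (Fin n)} {m : Option (Fin n)} {i : ℕ}
    (hi : i < (srt (pathList p m)).length) :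
    toFun p m ((srt (pathList p m)).get ⟨i, hi⟩) = (pathList p m)[i]? := by
  have hmem : (srt (pathList p m)).get ⟨i, hi⟩ ∈ pathList p m :=
    mem_srt.1 (List.get_mem _ _)
  rw [toFun_of_mem hmem]
  congr 1
  exact List.get_idxOf (srt_nodup _) _

lemma toFun_mem_some {p : Fin n → Option (Fin n)} (hp : IsForest p) {m : Option (Fin n)}
    {v : Fin n} (hv : v ∈ pathList p m) :
    ∃ w ∈ pathList p m, toFun p m v = some w := by
  have hvT : v ∈ srt (pathList p m) := mem_srt.2 hv
  have hlt : idx v (srt (pathList p m)) < (srt (pathList p m)).length :=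
    List.idxOf_lt_length_iff.2 hvT
  rw [length_srt (pathList_nodup hp m)] at hlt
  refine ⟨(pathList p m).get ⟨_, hlt⟩, List.get_mem _ _, ?_⟩
  rw [toFun_of_mem hv]
  exact List.getElem?_eq_some_iff.2 ⟨hlt, rfl⟩

lemma toFun_injOn {p : Fin n → Option (Fin n)} (hp : IsForest p) {m : Option (Fin n)}
    {v w : Fin n} (hv : v ∈ pathList p m) (hw : w ∈ pathList p m)
    (h : toFun p m v = toFun p m w) : v = w := by
  set L := pathList p m
  have hvT : v ∈ srt L := mem_srt.2 hv
  have hwT : w ∈ srt L := mem_srt.2 hw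
  have hvlt : idx v (srt L) < (srt L).length := List.idxOf_lt_length_iff.2 hvT
  have hwlt : idx w (srt L) < (srt L).length := List.idxOf_lt_length_iff.2 hwT
  have hvL : idx v (srt L) < L.length := by rwa [length_srt (pathList_nodup hp m)] at hvlt
  have hwL : idx w (srt L) < L.length := by rwa [length_srt (pathList_nodup hp m)] at hwlt
  rw [toFun_of_mem hv, toFun_of_mem hw,
    List.getElem?_eq_some_iff.2 ⟨hvL, rfl⟩, List.getElem?_eq_some_iff.2 ⟨hwL, rfl⟩] at h
  have hidx : idx v (srt L) = idx w (srt L) := by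
    have := List.nodup_iff_injective_get.1 (pathList_nodup hp m)
      (a₁ := ⟨_, hvL⟩) (a₂ := ⟨_, hwL⟩) (Option.some_inj.1 h)
    exact congrArg Fin.val this
  have h1 : (srt L).get ⟨_, hvlt⟩ = v := List.idxOf_get _
  have h2 : (srt L).get ⟨_, hwlt⟩ = w := List.idxOf_get _
  rw [← h1, ← h2]
  congr 1
  exact Fin.ext hidx

lemma per {f : Fin n → Option (Fin n)} {S : Finset (Fin n)}
    (hmap : ∀ v ∈ S, ∃ w ∈ S, f v = some w)
    (hinj : ∀ v ∈ S, ∀ w ∈ S, f v = f w → v = w)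
    {v : Fin n} (hv : v ∈ S) : ∃ k, (st f)^[k+1] (some v) = some v := by
  have traj : ∀ j, ∃ w, w ∈ S ∧ (st f)^[j] (some v) = some w := by
    intro j
    induction j with
    | zero => exact ⟨v, hv, rfl⟩
    | succ j ih =>
      obtain ⟨w, hw, hwj⟩ := ih
      obtain ⟨u, hu, hfu⟩ := hmap w hw
      exact ⟨u, hu, by rw [Function.iterate_succ_apply', hwj, st_some, hfu]⟩
  choose w hwS hw using traj
  obtain ⟨a, b, hab, heq⟩ := Finite.exists_ne_map_eq_of_infinite w
  obtain ⟨i, j, hij, hweq⟩ : ∃ i j, i < j ∧ w i = w j := by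
    rcases lt_or_gt_of_ne hab with h | h
    · exact ⟨a, b, h, heq⟩
    · exact ⟨b, a, h, heq.symm⟩
  set d := j - i with hd
  have hd1 : 1 ≤ d := by omega
  have cancel : ∀ t, (st f)^[t] (some v) = (st f)^[t+d] (some v) →
      some v = (st f)^[d] (some v) := by
    intro t
    induction t with
    | zero =>
      intro h
      simpa using h
    | succ t ih =>
      intro h
      rw [Function.iterate_succ_apply'] at h
      have harith : t + 1 + d = (t + d) + 1 := by omega
      rw [harith, Function.iterate_succ_apply'] at h
      rw [hw t, hw (t+d)] at h
      simp only [st_some] at h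
      have hwt : w t = w (t + d) := hinj _ (hwS t) _ (hwS (t+d)) h
      exact ih (by rw [hw t, hw (t+d), hwt])
  have h0 : (st f)^[i] (some v) = (st f)^[i+d] (some v) := by
    rw [hw i, hw (i+d)]
    have : i + d = j := by omega
    rw [this, hweq]
  have hfin := cancel i h0
  refine ⟨d - 1, ?_⟩
  rw [show d - 1 + 1 = d by omega]
  exact hfin.symm

lemma cyc_toFun {p : Fin n → Option (Fin n)} (hp : IsForest p) (m : Option (Fin n)) :
    Cyc (toFun p m) = (pathList p m).toFinset := by
  ext v
  rw [List.mem_toFinset]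
  constructor
  · intro hv
    by_contra hvL
    obtain ⟨k, hk⟩ := mem_Cyc.1 hv
    by_cases hB : ∃ j ≤ k, ∃ u ∈ pathList p m, (st (toFun p m))^[j] (some v) = some u
    · obtain ⟨j, hj, u, hu, hju⟩ := hB
      have stay : ∀ t, ∃ u' ∈ pathList p m, (st (toFun p m))^[j+t] (some v) = some u' := by
        intro t
        induction t with
        | zero => exact ⟨u, hu, hju⟩
        | succ t ih =>
          obtain ⟨u', hu', h'⟩ := ih
          obtain ⟨u'', hu'', h''⟩ := toFun_mem_some hp hu'
          refine ⟨u'', hu'', ?_⟩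
          rw [show j + (t+1) = (j+t)+1 by omega, Function.iterate_succ_apply', h', st_some, h'']
      obtain ⟨u', hu', h'⟩ := stay (k + 1 - j)
      rw [show j + (k+1-j) = k+1 by omega, hk] at h'
      exact hvL (Option.some_inj.1 h' ▸ hu')
    · push_neg at hB
      have hagree : ∀ j ≤ k, ∀ w', (st (toFun p m))^[j] (some v) = some w' →
          toFun p m w' = p w' := by
        intro j hj w' hw'
        exact toFun_of_not_mem (fun h => hB j hj w' h hw')
      have := traj_congr hagree (k+1) le_rfl
      rw [hk] at this
      exact (isForest_iff p).1 hp v k this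
  · intro hv
    refine mem_Cyc.2 (per (S := (pathList p m).toFinset) ?_ ?_ (List.mem_toFinset.2 hv))
    · intro a ha
      obtain ⟨w, hw, h⟩ := toFun_mem_some hp (List.mem_toFinset.1 ha)
      exact ⟨w, List.mem_toFinset.2 hw, h⟩
    · intro a ha b hb h
      exact toFun_injOn hp (List.mem_toFinset.1 ha) (List.mem_toFinset.1 hb) h

/-! ### Round trips -/

lemma pthT_toFun {p : Fin n → Option (Fin n)} (hp : IsForest p) (m : Option (Fin n)) :
    pthT (toFun p m) = srt (pathList p m) := by
  rw [pthT, cyc_toFun hp m]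
  rfl

lemma pthL_toFun {p : Fin n → Option (Fin n)} (hp : IsForest p) (m : Option (Fin n)) :
    pthL (toFun p m) = (pathList p m).map some := by
  apply List.ext_getElem?
  intro i
  rw [pthL, pthT_toFun hp m, List.getElem?_map, List.getElem?_map]
  by_cases hi : i < (srt (pathList p m)).length
  · have hiL : i < (pathList p m).length := by
      rwa [length_srt (pathList_nodup hp m)] at hi
    rw [List.getElem?_eq_some_iff.2 ⟨hi, rfl⟩, List.getElem?_eq_some_iff.2 ⟨hiL, rfl⟩]
    simp only [Option.map_some]
    rw [show (srt (pathList p m))[i] = (srt (pathList p m)).get ⟨i, hi⟩ from rfl, toFun_get hi]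
    exact congrArg some (List.getElem?_eq_some_iff.2 ⟨hiL, rfl⟩)
  · rw [List.getElem?_eq_none_iff.2 (by omega), List.getElem?_eq_none_iff.2 (by
      rw [← length_srt (pathList_nodup hp m)]; omega)]
    rfl

theorem invm_toFun {p : Fin n → Option (Fin n)} (hp : IsForest p) (m : Option (Fin n)) :
    invm (toFun p m) = m := by
  rw [invm, pthL_toFun hp m, List.getElem?_map, join_map_some, pathList_get? hp m 0]
  rfl

theorem invp_toFun {p : Fin n → Option (Fin n)} (hp : IsForest p) (m : Option (Fin n)) :
    invp (toFun p m) = p := by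
  funext v
  by_cases hv : v ∈ Cyc (toFun p m)
  · have hvL : v ∈ pathList p m := by
      rw [cyc_toFun hp m, List.mem_toFinset] at hv
      exact hv
    rw [invp, if_pos hv]
    have hvl : idx v (pathList p m) < (pathList p m).length := List.idxOf_lt_length_iff.2 hvL
    have hgetv : (pathList p m)[idx v (pathList p m)]? = some v := get?_indexOf hvL
    have hidx : idx (some v) (pthL (toFun p m)) = idx v (pathList p m) := by
      apply indexOf_eq_of_get? (pthL_nodup _)
      rw [pthL_toFun hp m, List.getElem?_map, hgetv]
      rfl
    rw [hidx, pthL_toFun hp m, List.getElem?_map, join_map_some, pathList_get? hp,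
      Function.iterate_succ_apply', ← pathList_get? hp, hgetv, st_some]
  · have hvL : v ∉ pathList p m := by
      rw [cyc_toFun hp m, List.mem_toFinset] at hv
      exact hv
    rw [invp, if_neg hv]
    exact toFun_of_not_mem hvL

theorem toFun_invp (f : Fin n → Option (Fin n)) : toFun (invp f) (invm f) = f := by
  have hforest := invp_forest f
  have hPk : ∀ k : ℕ, (pathList (invp f) (invm f))[k]? = ((pthL f)[k]?).join := by
    intro k
    rw [pathList_get? hforest, invm_traj]
  have hPmap : (pathList (invp f) (invm f)).map some = pthL f := by
    apply List.ext_getElem?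
    intro k
    rw [List.getElem?_map, hPk]
    rcases h : (pthL f)[k]? with _ | o
    · rfl
    · obtain ⟨u, hu, rfl⟩ := pthL_entry (List.mem_of_getElem? h)
      rfl
  have hPmem : ∀ v : Fin n, v ∈ pathList (invp f) (invm f) ↔ v ∈ Cyc f := by
    intro v
    rw [← some_mem_pthL, ← hPmap]
    exact (List.mem_map_of_injective (Option.some_injective _)).symm
  have hPfin : (pathList (invp f) (invm f)).toFinset = Cyc f := by
    ext v
    rw [List.mem_toFinset, hPmem]
  have hsrtP : srt (pathList (invp f) (invm f)) = pthT f := by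
    rw [srt, hPfin]
    rfl
  funext v
  by_cases hv : v ∈ Cyc f
  · have hvP : v ∈ pathList (invp f) (invm f) := (hPmem v).2 hv
    rw [toFun_of_mem hvP, hsrtP, hPk]
    have hvT : v ∈ pthT f := mem_pthT.2 hv
    have hj : idx v (pthT f) < (pthT f).length := List.idxOf_lt_length_iff.2 hvT
    have : (pthL f)[idx v (pthT f)]? = some (f v) := by
      rw [pthL, List.getElem?_map, List.getElem?_eq_some_iff.2 ⟨hj, rfl⟩]
      simp only [Option.map_some]
      exact congrArg some (congrArg f (List.idxOf_get _))
    rw [this]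
    rfl
  · rw [toFun_of_not_mem (fun h => hv ((hPmem v).1 h)), invp, if_neg hv]

/-! ### The bijection and the count -/

noncomputable def forestEquiv :
    ({p : Fin n → Option (Fin n) // IsForest p} × Option (Fin n)) ≃
      (Fin n → Option (Fin n)) where
  toFun x := toFun x.1.1 x.2
  invFun f := (⟨invp f, invp_forest f⟩, invm f)
  left_inv x := by
    obtain ⟨⟨p, hp⟩, m⟩ := x
    exact Prod.ext (Subtype.ext (invp_toFun hp m)) (invm_toFun hp m)
  right_inv f := toFun_invp f

end CayleyAux

/-- The number of ordered rooted forests on `{1,…,n}` is `(n+1)^(n-1)`. -/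
theorem card_ordered_forests (n : ℕ) :
    Nat.card {p : Fin n → Option (Fin n) // IsForest p} = (n + 1) ^ (n - 1) := by
  rcases n with _ | m
  · haveI : Unique {p : Fin 0 → Option (Fin 0) // IsForest p} :=
      { default := ⟨fun v => none, fun v => v.elim0⟩
        uniq := by
          rintro ⟨p, hp⟩
          apply Subtype.ext
          funext v
          exact v.elim0 }
    simp [Nat.card_unique]
  · have h1 : Nat.card ({p : Fin (m+1) → Option (Fin (m+1)) // IsForest p} ×
        Option (Fin (m+1))) = Nat.card (Fin (m+1) → Option (Fin (m+1))) :=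
      Nat.card_congr CayleyAux.forestEquiv
    rw [Nat.card_prod] at h1
    have h2 : Nat.card (Option (Fin (m+1))) = m + 2 := by
      rw [Nat.card_eq_fintype_card, Fintype.card_option, Fintype.card_fin]
    have h3 : Nat.card (Fin (m+1) → Option (Fin (m+1))) = (m+2)^(m+1) := by
      rw [Nat.card_eq_fintype_card, Fintype.card_fun, Fintype.card_option,
        Fintype.card_fin]
    rw [h2, h3] at h1
    have h4 : (m+2)^(m+1) = (m+2)^m * (m+2) := pow_succ _ _
    have h5 : Nat.card {p : Fin (m+1) → Option (Fin (m+1)) // IsForest p} * (m+2) =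
        (m+2)^m * (m+2) := by rw [h1, h4]
    have := Nat.eq_of_mul_eq_mul_right (show 0 < m + 2 by omega) h5
    simpa using this
end

section
/- For ordered forests F and G, the map f ↦ f⁻¹ is a bijection from S(F,G) to S(G,F); consequently |S(F,G)| = |S(G,F)|, i.e. the pairing ⟨F,G⟩ = |S(F,G)| is symmetric. -/
/-- `v ↠ w` : oriented path towards the roots, with `v ↠ v` by convention. -/
def Reaches {n : ℕ} (p : Fin n → Option (Fin n)) (v w : Fin n) : Prop :=
  Relation.ReflTransGen (ParentRel p) v w

/-- `S(F,G)` : bijections `f : V(F) → V(G)` with `x ↠ y` in `F` ⟹ `f(x) ≥ f(y)`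
and `f(x) ↠ f(y)` in `G` ⟹ `x ≥ y`. -/
def SFG {m n : ℕ} (F : Fin m → Option (Fin m)) (G : Fin n → Option (Fin n)) :
    Set (Fin m ≃ Fin n) :=
  {f | (∀ x y, Reaches F x y → f y ≤ f x) ∧ (∀ x y, Reaches G (f x) (f y) → y ≤ x)}

/-- `f ↦ f⁻¹` is a bijection from `S(F,G)` to `S(G,F)`; in particular
`|S(F,G)| = |S(G,F)|`, i.e. the pairing `⟨F,G⟩ = |S(F,G)|` is symmetric. -/
theorem SFG_symm {m n : ℕ} (F : Fin m → Option (Fin m)) (G : Fin n → Option (Fin n))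
    (hF : IsForest F) (hG : IsForest G) :
    (∀ f : Fin m ≃ Fin n, f ∈ SFG F G ↔ f.symm ∈ SFG G F) ∧
      Nat.card (SFG F G) = Nat.card (SFG G F) := by
  have key : ∀ (m n : ℕ) (F : Fin m → Option (Fin m)) (G : Fin n → Option (Fin n))
      (f : Fin m ≃ Fin n), f ∈ SFG F G → f.symm ∈ SFG G F := by
    intro m n F G f ⟨h1, h2⟩
    constructor
    · intro x y hxy
      exact h2 _ _ (by simpa using hxy)
    · intro x y hxy
      simpa using h1 _ _ hxy
  have hiff : ∀ f : Fin m ≃ Fin n, f ∈ SFG F G ↔ f.symm ∈ SFG G F := by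
    intro f
    constructor
    · exact key m n F G f
    · intro h
      have := key n m G F f.symm h
      simpa using this
  refine ⟨hiff, ?_⟩
  exact Nat.card_eq_of_bijective
    (fun f => ⟨f.1.symm, (hiff f.1).mp f.2⟩)
    ⟨fun a b hab => Subtype.ext (by
        have := congrArg Subtype.val hab
        simpa using congrArg Equiv.symm this),
     fun g => ⟨⟨g.1.symm, by have := (hiff g.1.symm).mpr (by simpa using g.2); exact this⟩,
        Subtype.ext (by simp)⟩⟩
end

section
/- For an ordered forest F with n vertices, |S_F| = n!/F!, where F! = ∏_{v ∈ V(F)} |{w ∈ V(F) : w ↠ v}| is the tree factorial of F. -/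
/-- `S_F` : permutations `σ` with `i ↠ j` in `F` ⟹ `σ⁻¹(i) ≥ σ⁻¹(j)`. -/
def SF {n : ℕ} (F : Fin n → Option (Fin n)) : Set (Equiv.Perm (Fin n)) :=
  {σ | ∀ i j, Reaches F i j → σ⁻¹ j ≤ σ⁻¹ i}

/-- The tree factorial `F! = ∏_v |{w : w ↠ v}|`. -/
noncomputable def treeFactorial {n : ℕ} (F : Fin n → Option (Fin n)) : ℕ :=
  ∏ v : Fin n, Nat.card {w : Fin n // Reaches F w v}

/-! ### Auxiliary material -/

section Aux

lemma reaches_root {n : ℕ} {F : Fin n → Option (Fin n)} {r x : Fin n} (hr : F r = none)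
    (h : Reaches F r x) : x = r := by
  rcases Relation.ReflTransGen.cases_head h with rfl | ⟨c, hc, _⟩
  · rfl
  · rw [ParentRel, hr] at hc; cases hc

variable {m : ℕ}

/-- Delete the root `r` from the forest. -/
def delRoot (F : Fin (m + 1) → Option (Fin (m + 1))) (r : Fin (m + 1)) :
    Fin m → Option (Fin m) := fun v => (F (r.succAbove v)).bind (finSuccEquiv' r)

lemma parentRel_delRoot {F : Fin (m + 1) → Option (Fin (m + 1))} {r : Fin (m + 1)}
    {a b : Fin m} :
    ParentRel (delRoot F r) a b ↔ ParentRel F (r.succAbove a) (r.succAbove b) := by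
  unfold ParentRel delRoot
  constructor
  · intro h
    rcases Option.bind_eq_some_iff.mp h with ⟨x, hx, hx2⟩
    have hx3 : x = (finSuccEquiv' r).symm (some b) := by
      rw [← hx2, Equiv.symm_apply_apply]
    rw [finSuccEquiv'_symm_some] at hx3
    rw [hx, hx3]
  · intro h
    rw [h]
    simp [finSuccEquiv'_succAbove]

lemma reaches_delRoot {F : Fin (m + 1) → Option (Fin (m + 1))} {r : Fin (m + 1)}
    (hr : F r = none) {a b : Fin m} :
    Reaches (delRoot F r) a b ↔ Reaches F (r.succAbove a) (r.succAbove b) := by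
  constructor
  · intro h
    induction h with
    | refl => exact Relation.ReflTransGen.refl
    | tail _ h2 ih => exact ih.tail (parentRel_delRoot.mp h2)
  · intro h
    have key : ∀ x : Fin (m + 1), Relation.ReflTransGen (ParentRel F) x (r.succAbove b) →
        ∀ a : Fin m, x = r.succAbove a → Reaches (delRoot F r) a b := by
      intro x h
      induction h using Relation.ReflTransGen.head_induction_on with
      | refl =>
        intro a ha
        have hba : b = a := Fin.succAbove_right_injective ha
        rw [← hba]
        exact Relation.ReflTransGen.refl
      | head step rest ih =>
        rename_i x' c
        intro a ha
        have hcr : c ≠ r := by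
          intro hceq
          rw [hceq] at rest
          exact Fin.succAbove_ne r b (reaches_root hr rest)
        obtain ⟨c', hc'⟩ := Fin.exists_succAbove_eq hcr
        refine Relation.ReflTransGen.head ?_ (ih c' hc'.symm)
        rw [ha, ← hc'] at step
        exact parentRel_delRoot.mpr step
    exact key _ h a rfl

lemma transGen_delRoot {F : Fin (m + 1) → Option (Fin (m + 1))} {r : Fin (m + 1)}
    {a b : Fin m} (h : Relation.TransGen (ParentRel (delRoot F r)) a b) :
    Relation.TransGen (ParentRel F) (r.succAbove a) (r.succAbove b) := by
  induction h with
  | single h => exact Relation.TransGen.single (parentRel_delRoot.mp h)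
  | tail _ h ih => exact ih.tail (parentRel_delRoot.mp h)

lemma isForest_delRoot {F : Fin (m + 1) → Option (Fin (m + 1))} {r : Fin (m + 1)}
    (hF : IsForest F) : IsForest (delRoot F r) := fun v hv =>
  hF (r.succAbove v) (transGen_delRoot hv)

lemma card_reaches_delRoot {F : Fin (m + 1) → Option (Fin (m + 1))} {r : Fin (m + 1)}
    (hr : F r = none) (v : Fin m) :
    Nat.card {w : Fin m // Reaches (delRoot F r) w v}
      = Nat.card {w : Fin (m + 1) // Reaches F w (r.succAbove v)} := by
  apply Nat.card_eq_of_bijective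
    (fun w => (⟨r.succAbove w.1, (reaches_delRoot hr).mp w.2⟩ :
      {w : Fin (m + 1) // Reaches F w (r.succAbove v)}))
  constructor
  · intro w1 w2 h
    exact Subtype.ext (Fin.succAbove_right_injective (congrArg Subtype.val h))
  · rintro ⟨w, hw⟩
    have hwr : w ≠ r := by
      intro h
      exact Fin.succAbove_ne r v (reaches_root hr (h ▸ hw))
    obtain ⟨u, hu⟩ := Fin.exists_succAbove_eq hwr
    exact ⟨⟨u, (reaches_delRoot hr).mpr (hu ▸ hw)⟩, Subtype.ext hu⟩

lemma treeFactorial_delRoot {F : Fin (m + 1) → Option (Fin (m + 1))} {r : Fin (m + 1)}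
    (hr : F r = none) :
    treeFactorial F
      = Nat.card {w : Fin (m + 1) // Reaches F w r} * treeFactorial (delRoot F r) := by
  unfold treeFactorial
  rw [Fin.prod_univ_succAbove (fun v => Nat.card {w : Fin (m + 1) // Reaches F w v}) r]
  congr 1
  exact Finset.prod_congr rfl fun v _ => (card_reaches_delRoot hr v).symm

/-- Insert a new first element `r` in a permutation. -/
def insRoot (r : Fin (m + 1)) (τ : Equiv.Perm (Fin m)) : Equiv.Perm (Fin (m + 1)) :=
  (finSuccEquiv m).trans (τ.optionCongr.trans (finSuccEquiv' r).symm)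

lemma insRoot_zero (r : Fin (m + 1)) (τ : Equiv.Perm (Fin m)) : insRoot r τ 0 = r := by
  simp [insRoot, finSuccEquiv'_symm_none]

lemma insRoot_succ (r : Fin (m + 1)) (τ : Equiv.Perm (Fin m)) (i : Fin m) :
    insRoot r τ i.succ = r.succAbove (τ i) := by
  simp [insRoot, finSuccEquiv'_symm_some]

lemma insRoot_inv_root (r : Fin (m + 1)) (τ : Equiv.Perm (Fin m)) :
    (insRoot r τ)⁻¹ r = 0 := by
  conv_lhs => rw [← insRoot_zero r τ]
  exact Equiv.symm_apply_apply _ _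

lemma insRoot_inv_succAbove (r : Fin (m + 1)) (τ : Equiv.Perm (Fin m)) (x : Fin m) :
    (insRoot r τ)⁻¹ (r.succAbove x) = (τ⁻¹ x).succ := by
  have : r.succAbove x = insRoot r τ (τ⁻¹ x).succ := by
    rw [insRoot_succ]; exact congrArg r.succAbove (Equiv.apply_symm_apply τ x).symm
  rw [this]; exact Equiv.symm_apply_apply _ _

lemma sf_root {F : Fin (m + 1) → Option (Fin (m + 1))} (hF : IsForest F)
    {σ : Equiv.Perm (Fin (m + 1))} (hσ : σ ∈ SF F) : F (σ 0) = none := by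
  set r := σ 0 with hr
  cases hp : F r with
  | none => rfl
  | some p =>
    have hreach : Reaches F r p := Relation.ReflTransGen.single hp
    have h1 : σ⁻¹ p ≤ σ⁻¹ r := hσ r p hreach
    have h2 : σ⁻¹ r = 0 := by rw [hr]; exact Equiv.symm_apply_apply _ _
    have h3 : σ⁻¹ p = 0 := le_antisymm (h2 ▸ h1) (Fin.zero_le _)
    have : p = r := by
      have := h3.trans h2.symm
      exact σ⁻¹.injective this
    exact absurd (Relation.TransGen.single (show ParentRel F r r from this ▸ hp)) (hF r)

lemma mem_ins {F : Fin (m + 1) → Option (Fin (m + 1))} {r : Fin (m + 1)}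
    (hr : F r = none) (τ : Equiv.Perm (Fin m)) (hτ : τ ∈ SF (delRoot F r)) :
    insRoot r τ ∈ SF F := by
  intro i j hij
  by_cases hj : j = r
  · subst hj
    rw [insRoot_inv_root]
    exact Fin.zero_le _
  · have hi : i ≠ r := by
      rintro rfl
      exact hj (reaches_root hr hij)
    obtain ⟨a, ha⟩ := Fin.exists_succAbove_eq hi
    obtain ⟨b, hb⟩ := Fin.exists_succAbove_eq hj
    have hab : Reaches (delRoot F r) a b := (reaches_delRoot hr).mpr (by rw [ha, hb]; exact hij)
    have hle := hτ a b hab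
    rw [← ha, ← hb, insRoot_inv_succAbove, insRoot_inv_succAbove]
    exact Fin.succ_le_succ_iff.mpr hle

lemma mem_of_ins {F : Fin (m + 1) → Option (Fin (m + 1))} {r : Fin (m + 1)}
    (hr : F r = none) {τ : Equiv.Perm (Fin m)} (hσ : insRoot r τ ∈ SF F) :
    τ ∈ SF (delRoot F r) := by
  intro a b hab
  have hreach := (reaches_delRoot hr).mp hab
  have hle := hσ _ _ hreach
  rw [insRoot_inv_succAbove, insRoot_inv_succAbove] at hle
  exact Fin.succ_le_succ_iff.mp hle

lemma insRoot_surj {r : Fin (m + 1)} {σ : Equiv.Perm (Fin (m + 1))} (h0 : σ 0 = r) :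
    ∃ τ : Equiv.Perm (Fin m), insRoot r τ = σ := by
  set ψ : Option (Fin m) ≃ Option (Fin m) :=
    ((finSuccEquiv m).symm.trans (σ.trans (finSuccEquiv' r))) with hψ
  set τ : Equiv.Perm (Fin m) := ψ.removeNone with hτdef
  have key : ∀ i : Fin m, σ i.succ = r.succAbove (τ i) := by
    intro i
    have hne : σ i.succ ≠ r := by
      intro h
      have : σ i.succ = σ 0 := by rw [h, h0]
      exact Fin.succ_ne_zero i (σ.injective this)
    have hψi : ψ (some i) = finSuccEquiv' r (σ i.succ) := by
      simp [hψ]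
    have hx : ∃ x', ψ (some i) = some x' := by
      rw [hψi]
      cases h : finSuccEquiv' r (σ i.succ) with
      | none =>
        exfalso
        apply hne
        have := congrArg (finSuccEquiv' r).symm h
        rw [Equiv.symm_apply_apply, finSuccEquiv'_symm_none] at this
        exact this
      | some x => exact ⟨x, rfl⟩
    have h1 : some (τ i) = ψ (some i) := Equiv.removeNone_some ψ hx
    have h2 : finSuccEquiv' r (σ i.succ) = some (τ i) := by rw [h1, hψi]
    have := congrArg (finSuccEquiv' r).symm h2
    rw [Equiv.symm_apply_apply, finSuccEquiv'_symm_some] at this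
    exact this
  have hins : insRoot r τ = σ := by
    apply Equiv.ext
    intro i
    induction i using Fin.cases with
    | zero => rw [insRoot_zero, h0]
    | succ i => rw [insRoot_succ, key]
  exact ⟨τ, hins⟩

lemma insRoot_inj {r : Fin (m + 1)} {τ1 τ2 : Equiv.Perm (Fin m)}
    (h : insRoot r τ1 = insRoot r τ2) : τ1 = τ2 := by
  refine Equiv.ext fun i => ?_
  have h2 : insRoot r τ1 i.succ = insRoot r τ2 i.succ := by rw [h]
  rw [insRoot_succ, insRoot_succ] at h2
  exact Fin.succAbove_right_injective h2

lemma card_SF_fiber {F : Fin (m + 1) → Option (Fin (m + 1))} {r : Fin (m + 1)}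
    (hr : F r = none) :
    Nat.card (SF (delRoot F r))
      = Nat.card {σ : Equiv.Perm (Fin (m + 1)) // σ ∈ SF F ∧ σ 0 = r} := by
  refine Nat.card_eq_of_bijective
    (fun τ => ⟨insRoot r τ.1, mem_ins hr τ.1 τ.2, insRoot_zero r τ.1⟩) ⟨?_, ?_⟩
  · intro τ1 τ2 h
    exact Subtype.ext (insRoot_inj (congrArg Subtype.val h))
  · rintro ⟨σ, hσ, h0⟩
    obtain ⟨τ, hins⟩ := insRoot_surj h0
    exact ⟨⟨τ, mem_of_ins hr (hins ▸ hσ)⟩, Subtype.ext hins⟩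

/-! ### Roots partition -/

lemma exists_root {n : ℕ} {F : Fin n → Option (Fin n)} (hF : IsForest F) (w : Fin n) :
    ∃ r, F r = none ∧ Reaches F w r := by
  let R : Fin n → Fin n → Prop := fun a b => ParentRel F b a
  have wf : WellFounded R := by
    haveI : IsTrans (Fin n) (Relation.TransGen R) :=
      ⟨fun _ _ _ h1 h2 => h1.trans h2⟩
    haveI : IsIrrefl (Fin n) (Relation.TransGen R) := by
      constructor
      intro a ha
      exact hF a ((Relation.transGen_swap).mp ha)
    exact Subrelation.wf (fun h => Relation.TransGen.single h)
      (Finite.wellFounded_of_trans_of_irrefl (Relation.TransGen R))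
  refine wf.induction (C := fun w => ∃ r, F r = none ∧ Reaches F w r) w ?_
  intro x ih
  cases h : F x with
  | none => exact ⟨x, h, Relation.ReflTransGen.refl⟩
  | some p =>
    obtain ⟨r, hr, hp⟩ := ih p h
    exact ⟨r, hr, Relation.ReflTransGen.head h hp⟩

lemma root_unique {n : ℕ} {F : Fin n → Option (Fin n)} {w r1 r2 : Fin n}
    (h1 : F r1 = none) (h2 : F r2 = none)
    (hw1 : Reaches F w r1) (hw2 : Reaches F w r2) : r1 = r2 := by
  have U : Relator.RightUnique (ParentRel F) := by
    intro a b c hb hc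
    rw [ParentRel] at hb hc
    exact Option.some_injective _ (hb ▸ hc)
  rcases Relation.ReflTransGen.total_of_right_unique U hw1 hw2 with h | h
  · exact (reaches_root h1 h).symm
  · exact reaches_root h2 h

noncomputable def rootEquiv {n : ℕ} {F : Fin n → Option (Fin n)} (hF : IsForest F) :
    Fin n ≃ Σ r : {r : Fin n // F r = none}, {w : Fin n // Reaches F w r.1} where
  toFun w := ⟨⟨(exists_root hF w).choose, (exists_root hF w).choose_spec.1⟩,
    ⟨w, (exists_root hF w).choose_spec.2⟩⟩
  invFun x := x.2.1
  left_inv w := rfl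
  right_inv := by
    rintro ⟨⟨r, hr⟩, ⟨w, hw⟩⟩
    have : (exists_root hF w).choose = r :=
      root_unique (exists_root hF w).choose_spec.1 hr (exists_root hF w).choose_spec.2 hw
    subst this
    rfl

lemma nat_card_sigma {ι : Type*} [Fintype ι] (f : ι → Type*) [∀ i, Finite (f i)] :
    Nat.card (Σ i, f i) = ∑ i, Nat.card (f i) := by
  classical
  letI : ∀ i, Fintype (f i) := fun i => Fintype.ofFinite _
  simp [Nat.card_eq_fintype_card, Fintype.card_sigma]

lemma sum_card_roots {n : ℕ} {F : Fin n → Option (Fin n)} (hF : IsForest F) :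
    ∑ r : {r : Fin n // F r = none}, Nat.card {w : Fin n // Reaches F w r.1} = n := by
  classical
  have := Nat.card_congr (rootEquiv hF)
  rw [Nat.card_eq_fintype_card, Fintype.card_fin, nat_card_sigma] at this
  exact this.symm

end Aux

lemma card_SF_mul_treeFactorial_aux :
    ∀ n : ℕ, ∀ F : Fin n → Option (Fin n), IsForest F →
      Nat.card (SF F) * treeFactorial F = n.factorial := by
  intro n
  induction n with
  | zero =>
    intro F _
    have h1 : SF F = Set.univ := by
      ext σ
      simp only [Set.mem_univ, iff_true]
      intro i _ _
      exact i.elim0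
    have h2 : treeFactorial F = 1 := by
      unfold treeFactorial
      simp
    rw [h1, h2, Nat.card_univ, Nat.card_eq_fintype_card]
    simp
  | succ m ih =>
    intro F hF
    classical
    have hcard : Nat.card (SF F)
        = ∑ r : {r : Fin (m + 1) // F r = none},
            Nat.card {σ : Equiv.Perm (Fin (m + 1)) // σ ∈ SF F ∧ σ 0 = r.1} := by
      have e : ↥(SF F) ≃ Σ r : {r : Fin (m + 1) // F r = none},
          {σ : Equiv.Perm (Fin (m + 1)) // σ ∈ SF F ∧ σ 0 = r.1} :=
        { toFun := fun σ => ⟨⟨σ.1 0, sf_root hF σ.2⟩, ⟨σ.1, σ.2, rfl⟩⟩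
          invFun := fun x => ⟨x.2.1, x.2.2.1⟩
          left_inv := fun σ => rfl
          right_inv := fun x => by
            obtain ⟨⟨r, hr⟩, σ, hσ, h0⟩ := x
            cases h0
            rfl }
      rw [Nat.card_congr e, nat_card_sigma]
    calc Nat.card (SF F) * treeFactorial F
        = ∑ r : {r : Fin (m + 1) // F r = none},
            Nat.card {σ : Equiv.Perm (Fin (m + 1)) // σ ∈ SF F ∧ σ 0 = r.1}
              * treeFactorial F := by
          rw [hcard, Finset.sum_mul]
      _ = ∑ r : {r : Fin (m + 1) // F r = none},
            m.factorial * Nat.card {w : Fin (m + 1) // Reaches F w r.1} := by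
          refine Finset.sum_congr rfl fun r _ => ?_
          rw [← card_SF_fiber r.2, treeFactorial_delRoot r.2,
            mul_comm (Nat.card {w : Fin (m + 1) // Reaches F w r.1}) (treeFactorial _),
            ← mul_assoc, ih _ (isForest_delRoot hF)]
      _ = m.factorial * ∑ r : {r : Fin (m + 1) // F r = none},
            Nat.card {w : Fin (m + 1) // Reaches F w r.1} := by
          rw [Finset.mul_sum]
      _ = m.factorial * (m + 1) := by rw [sum_card_roots hF]
      _ = (m + 1).factorial := by rw [Nat.factorial_succ, mul_comm]

/-- `|S_F| = n!/F!`, i.e. `|S_F| ⬝ F! = n!`. -/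
theorem card_SF_mul_treeFactorial {n : ℕ} (F : Fin n → Option (Fin n))
    (hF : IsForest F) :
    Nat.card (SF F) * treeFactorial F = n.factorial :=
  card_SF_mul_treeFactorial_aux n F hF
end

section
/- Let H be the free associative (non-unital) algebra on planar rooted forests with concatenation product, and let F ↖ G denote the planar forest obtained by grafting G onto the rightmost leaf of F. Then for all planar forests x, y, z: (x ↖ y) ↖ z = x ↖ (y ↖ z) and (xy) ↖ z = x(y ↖ z). That is, planar forests with concatenation and ↖ form a duplicial algebra. -/
/-- Planar rooted trees: a node with an ordered list of subtrees. -/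
inductive PTree : Type
  | node : List PTree → PTree

/-- `graftList F G` grafts the planar forest `G` on the rightmost leaf of the
planar forest `F` (with the convention `graftList [] G = G`). -/
def graftList : List PTree → List PTree → List PTree
  | [], G => G
  | [PTree.node cs], G => [PTree.node (graftList cs G)]
  | t :: t' :: ts, G => t :: graftList (t' :: ts) G

theorem graft_ne (x y : List PTree) (hx : x ≠ []) : graftList x y ≠ [] := by
  match x with
  | [PTree.node cs] => simp [graftList]
  | t :: t' :: ts => simp [graftList]

theorem graft_cons (t : PTree) (L z : List PTree) (hL : L ≠ []) :
    graftList (t :: L) z = t :: graftList L z := by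
  match L with
  | t' :: ts => simp [graftList]

theorem graft_assoc (x y z : List PTree) :
    graftList (graftList x y) z = graftList x (graftList y z) := by
  induction x, y using graftList.induct with
  | case1 G => simp [graftList]
  | case2 cs G ih => simp [graftList, ih]
  | case3 t t' ts G ih =>
      rw [graft_cons t (t' :: ts) G (by simp),
        graft_cons _ _ _ (graft_ne _ _ (by simp)), ih,
        graft_cons t (t' :: ts) (graftList G z) (by simp)]

theorem graft_append (x y z : List PTree) (hy : y ≠ []) :
    graftList (x ++ y) z = x ++ graftList y z := by
  induction x with
  | nil => rfl
  | cons a xs ih =>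
      rw [List.cons_append, graft_cons _ _ _ (by simp [hy]), ih, List.cons_append]

/-- Nonempty planar forests with concatenation and rightmost-leaf grafting form a
duplicial algebra: both products are associative and `(xy) ↖ z = x (y ↖ z)`. -/
theorem planarForests_duplicial (x y z : List PTree)
    (hx : x ≠ []) (hy : y ≠ []) (hz : z ≠ []) :
    graftList (graftList x y) z = graftList x (graftList y z) ∧
      graftList (x ++ y) z = x ++ graftList y z := by
  exact ⟨graft_assoc x y z, graft_append x y z hy⟩
end

section
/- The augmentation ideal of the algebra of planar rooted forests, with concatenation product · and rightmost-leaf grafting ↖, is the free duplicial algebra on one generator (the single-vertex tree): for any duplicial algebra A and any a ∈ A, there is a unique duplicial algebra morphism φ from nonempty planar forests to A with φ(•) = a. -/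
theorem graftList_ne_nil (F G : List PTree) (hG : G ≠ []) : graftList F G ≠ [] := by
  match F with
  | [] => simpa [graftList] using hG
  | [PTree.node cs] => simp [graftList]
  | t :: t' :: ts => simp [graftList]

/-- Nonempty planar forests. -/
def NEF : Type := {l : List PTree // l ≠ []}

/-- Concatenation of nonempty planar forests. -/
def nefMul (F G : NEF) : NEF := ⟨F.1 ++ G.1, by simp [F.2]⟩

/-- Rightmost-leaf grafting of nonempty planar forests. -/
def nefGraft (F G : NEF) : NEF := ⟨graftList F.1 G.1, graftList_ne_nil _ _ G.2⟩

/-- The single-vertex planar tree. -/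
def oneVertex : NEF := ⟨[PTree.node []], by simp⟩

/-- Bilinear extension of a product on basis elements to the free module. -/
noncomputable def bil {K : Type*} [Field K] (f : NEF → NEF → NEF)
    (u v : NEF →₀ K) : NEF →₀ K :=
  u.sum fun a c => v.sum fun b d => Finsupp.single (f a b) (c * d)

section Aux

variable {A : Type*} [AddCommGroup A] (a : A) (m g : A → A → A)

/-- Evaluation of the unique duplicial morphism on basis forests. -/
def phi0 : List PTree → A
  | [] => a
  | [PTree.node []] => a
  | [PTree.node (c :: cs)] => g a (phi0 (c :: cs))
  | t :: t' :: ts => m (phi0 [t]) (phi0 (t' :: ts))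
termination_by l => sizeOf l
decreasing_by all_goals (simp; try omega) <;> (cases t' with | node cs => simp; omega)

lemma phi0_one : phi0 a m g [PTree.node []] = a := by simp [phi0]

lemma phi0_node (l : List PTree) (hl : l ≠ []) :
    phi0 a m g [PTree.node l] = g a (phi0 a m g l) := by
  cases l with
  | nil => exact absurd rfl hl
  | cons c cs => simp [phi0]

lemma phi0_cons (t : PTree) (rest : List PTree) (hr : rest ≠ []) :
    phi0 a m g (t :: rest) = m (phi0 a m g [t]) (phi0 a m g rest) := by
  cases rest with
  | nil => exact absurd rfl hr
  | cons u us => cases t with | node cs => simp [phi0]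

theorem phi0_mul (hm : ∀ x y z, m (m x y) z = m x (m y z)) :
    ∀ F G : List PTree, F ≠ [] → G ≠ [] →
      phi0 a m g (F ++ G) = m (phi0 a m g F) (phi0 a m g G)
  | [], _, hF, _ => absurd rfl hF
  | [t], G, _, hG => by
      rw [List.singleton_append, phi0_cons a m g t G hG]
  | t :: t' :: ts, G, _, hG => by
      have h1 : (t :: t' :: ts) ++ G = t :: ((t' :: ts) ++ G) := rfl
      rw [h1, phi0_cons a m g t _ (by simp),
        phi0_mul hm (t' :: ts) G (by simp) hG,
        ← hm, ← phi0_cons a m g t (t' :: ts) (by simp)]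
termination_by F _ _ _ => sizeOf F
decreasing_by all_goals (simp; try omega)

theorem phi0_graft (hg : ∀ x y z, g (g x y) z = g x (g y z))
    (hmg : ∀ x y z, g (m x y) z = m x (g y z)) :
    ∀ F G : List PTree, F ≠ [] → G ≠ [] →
      phi0 a m g (graftList F G) = g (phi0 a m g F) (phi0 a m g G)
  | [PTree.node []], G, _, hG => by
      have h1 : graftList [PTree.node []] G = [PTree.node G] := by
        simp [graftList]
      rw [h1, phi0_node a m g G hG, phi0_one]
  | [PTree.node (c :: cs)], G, _, hG => by
      have h1 : graftList [PTree.node (c :: cs)] G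
          = [PTree.node (graftList (c :: cs) G)] := by
        simp [graftList]
      rw [h1, phi0_node a m g _ (graftList_ne_nil _ _ hG),
        phi0_graft hg hmg (c :: cs) G (by simp) hG, ← hg,
        ← phi0_node a m g (c :: cs) (by simp)]
  | t :: t' :: ts, G, _, hG => by
      have h1 : graftList (t :: t' :: ts) G = t :: graftList (t' :: ts) G := by
        simp [graftList]
      rw [h1, phi0_cons a m g t _ (graftList_ne_nil _ _ hG),
        phi0_graft hg hmg (t' :: ts) G (by simp) hG, ← hmg,
        ← phi0_cons a m g t (t' :: ts) (by simp)]
termination_by F _ _ _ => sizeOf F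
decreasing_by all_goals (simp; try omega)

end Aux

section BilLemmas

variable {K : Type*} [Field K] (f : NEF → NEF → NEF)

lemma bil_single_single (F G : NEF) (c d : K) :
    bil f (Finsupp.single F c) (Finsupp.single G d)
      = Finsupp.single (f F G) (c * d) := by
  unfold bil
  rw [Finsupp.sum_single_index, Finsupp.sum_single_index]
  · simp
  · simp

lemma bil_zero_left (v : NEF →₀ K) : bil f 0 v = 0 := by
  simp [bil]

lemma bil_zero_right (u : NEF →₀ K) : bil f u 0 = 0 := by
  simp [bil]

lemma bil_add_left (u u' v : NEF →₀ K) :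
    bil f (u + u') v = bil f u v + bil f u' v := by
  unfold bil
  apply Finsupp.sum_add_index' <;> intros <;>
    simp [add_mul, Finsupp.single_add, Finsupp.sum_add]

lemma bil_add_right (u v v' : NEF →₀ K) :
    bil f u (v + v') = bil f u v + bil f u v' := by
  unfold bil
  rw [← Finsupp.sum_add]
  apply Finsupp.sum_congr
  intro F _
  apply Finsupp.sum_add_index' <;> intros <;>
    simp [mul_add, Finsupp.single_add]

variable {A : Type*} [AddCommGroup A] [Module K A]

lemma bil_hom (φ : (NEF →₀ K) →ₗ[K] A) (B : A →ₗ[K] A →ₗ[K] A)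
    (h : ∀ F G : NEF, φ (Finsupp.single (f F G) 1)
        = B (φ (Finsupp.single F 1)) (φ (Finsupp.single G 1))) :
    ∀ u v, φ (bil f u v) = B (φ u) (φ v) := by
  intro u
  induction u using Finsupp.induction_linear with
  | zero => intro v; simp [bil_zero_left]
  | add u u' hu hu' => intro v; simp [bil_add_left, hu, hu']
  | single F c =>
    intro v
    induction v using Finsupp.induction_linear with
    | zero => simp [bil_zero_right]
    | add v v' hv hv' => simp [bil_add_right, hv, hv']
    | single G d =>
      rw [bil_single_single]
      have h1 : (Finsupp.single (f F G) (c * d) : NEF →₀ K)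
          = (c * d) • Finsupp.single (f F G) 1 := by
        rw [Finsupp.smul_single, smul_eq_mul, mul_one]
      have h2 : (Finsupp.single F c : NEF →₀ K) = c • Finsupp.single F 1 := by
        rw [Finsupp.smul_single, smul_eq_mul, mul_one]
      have h3 : (Finsupp.single G d : NEF →₀ K) = d • Finsupp.single G 1 := by
        rw [Finsupp.smul_single, smul_eq_mul, mul_one]
      rw [h1, h2, h3, map_smul, map_smul, map_smul, h F G]
      rw [map_smul, LinearMap.smul_apply, map_smul, smul_smul]

end BilLemmas

/-- The linear span of nonempty planar forests, with concatenation and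
rightmost-leaf grafting, is the free duplicial algebra on the single-vertex tree:
for every duplicial algebra `(A, m, g)` and every `a ∈ A` there is a unique
morphism of duplicial algebras `φ` with `φ(•) = a`. -/
theorem planarForests_free_duplicial (K : Type*) [Field K]
    (A : Type*) [AddCommGroup A] [Module K A]
    (m g : A →ₗ[K] A →ₗ[K] A)
    (hm : ∀ x y z : A, m (m x y) z = m x (m y z))
    (hg : ∀ x y z : A, g (g x y) z = g x (g y z))
    (hmg : ∀ x y z : A, g (m x y) z = m x (g y z))
    (a : A) :
    ∃! φ : (NEF →₀ K) →ₗ[K] A,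
      φ (Finsupp.single oneVertex 1) = a ∧
      (∀ u v, φ (bil nefMul u v) = m (φ u) (φ v)) ∧
      (∀ u v, φ (bil nefGraft u v) = g (φ u) (φ v)) := by
  classical
  set m' : A → A → A := fun x y => m x y with hm'
  set g' : A → A → A := fun x y => g x y with hg'
  set φ : (NEF →₀ K) →ₗ[K] A :=
    Finsupp.lift A K NEF (fun F => phi0 a m' g' F.1) with hφ
  have hsingle : ∀ (F : NEF) (c : K), φ (Finsupp.single F c) = c • phi0 a m' g' F.1 := by
    intro F c
    simp [hφ, Finsupp.lift_apply, Finsupp.sum_single_index]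
  have hone : φ (Finsupp.single oneVertex 1) = a := by
    rw [hsingle]; simp [oneVertex, phi0_one]
  have hmul : ∀ u v, φ (bil nefMul u v) = m (φ u) (φ v) := by
    apply bil_hom
    intro F G
    rw [hsingle, hsingle, hsingle, one_smul, one_smul, one_smul]
    exact phi0_mul a m' g' hm F.1 G.1 F.2 G.2
  have hgraft : ∀ u v, φ (bil nefGraft u v) = g (φ u) (φ v) := by
    apply bil_hom
    intro F G
    rw [hsingle, hsingle, hsingle, one_smul, one_smul, one_smul]
    exact phi0_graft a m' g' hg hmg F.1 G.1 F.2 G.2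
  refine ⟨φ, ⟨hone, hmul, hgraft⟩, ?_⟩
  rintro ψ ⟨ψone, ψmul, ψgraft⟩
  -- uniqueness : ψ agrees with φ on all basis vectors
  have key : ∀ l : List PTree, ∀ hl : l ≠ [],
      ψ (Finsupp.single (⟨l, hl⟩ : NEF) 1) = φ (Finsupp.single (⟨l, hl⟩ : NEF) 1) := by
    intro l
    induction l using phi0.induct with
    | case1 => intro hl; exact absurd rfl hl
    | case2 =>
      intro hl
      have : (⟨[PTree.node []], hl⟩ : NEF) = oneVertex := rfl
      rw [this, ψone, hone]
    | case3 c cs ih =>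
      intro hl
      have hcs : (c :: cs : List PTree) ≠ [] := by simp
      have hb : (⟨[PTree.node (c :: cs)], hl⟩ : NEF)
          = nefGraft oneVertex ⟨c :: cs, hcs⟩ := by
        apply Subtype.ext
        simp [nefGraft, oneVertex, graftList]
      have hbil : (Finsupp.single (⟨[PTree.node (c :: cs)], hl⟩ : NEF) 1 : NEF →₀ K)
          = bil nefGraft (Finsupp.single oneVertex 1)
              (Finsupp.single (⟨c :: cs, hcs⟩ : NEF) 1) := by
        exact (congrArg (fun x : NEF => (Finsupp.single x (1:K))) hb).trans
          ((bil_single_single nefGraft oneVertex ⟨c :: cs, hcs⟩ (1:K) 1).trans (by rw [mul_one])).symm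
      rw [hbil, ψgraft, hgraft, ψone, hone, ih hcs]
    | case4 t t' ts ih1 ih2 =>
      intro hl
      have h1 : ([t] : List PTree) ≠ [] := by simp
      have h2 : (t' :: ts : List PTree) ≠ [] := by simp
      have hb : (⟨t :: t' :: ts, hl⟩ : NEF)
          = nefMul ⟨[t], h1⟩ ⟨t' :: ts, h2⟩ := by
        apply Subtype.ext
        simp [nefMul]
      have hbil : (Finsupp.single (⟨t :: t' :: ts, hl⟩ : NEF) 1 : NEF →₀ K)
          = bil nefMul (Finsupp.single (⟨[t], h1⟩ : NEF) 1)
              (Finsupp.single (⟨t' :: ts, h2⟩ : NEF) 1) := by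
        exact (congrArg (fun x : NEF => (Finsupp.single x (1:K))) hb).trans
          ((bil_single_single nefMul ⟨[t], h1⟩ ⟨t' :: ts, h2⟩ (1:K) 1).trans (by rw [mul_one])).symm
      rw [hbil, ψmul, hmul, ih1 h1, ih2 h2]
  apply Finsupp.lhom_ext
  intro F c
  have hc : (Finsupp.single F c : NEF →₀ K) = c • Finsupp.single F 1 := by
    rw [Finsupp.smul_single, smul_eq_mul, mul_one]
  rw [hc, map_smul, map_smul]
  obtain ⟨l, hl⟩ := F
  rw [key l hl]
end

section
/- In the Hopf algebra of planar forests, for all nonempty planar forests x, y, writing δ_≺ and δ_≻ for the dendriform half-coproducts determined by the rightmost leaf, one has δ_≺(xy) = y⊗x + x'y⊗x'' + x y'_≺⊗y''_≺ + y'_≺⊗x y''_≺ + x'y'_≺⊗x''y''_≺ and δ_≻(xy) = x⊗y + x'⊗x''y + x y'_≻⊗y''_≻ + y'_≻⊗x y''_≻ + x'y'_≻⊗x''y''_≻ (Sweedler notation), i.e. the planar forest algebra is a codendriform bialgebra. -/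
def cutsT (c : List (List PTree × List PTree × Bool)) (cs : List PTree) :
    List (List PTree × List PTree × Bool) :=
  ([PTree.node cs], ([] : List PTree), true) ::
    c.map (fun x => (x.1, [PTree.node x.2.1], x.2.2))

/-- All admissible cuts of a planar forest, listed as triples
`(Lea_v F, Roo_v F, b)` where `b` records whether the rightmost leaf of the
forest belongs to the `Lea` part. -/
def cutsF : List PTree → List (List PTree × List PTree × Bool)
  | [] => [([], [], false)]
  | [PTree.node cs] => cutsT (cutsF cs) cs
  | PTree.node cs :: t' :: ts =>
      (cutsT (cutsF cs) cs).flatMap fun x => (cutsF (t' :: ts)).map fun y =>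
        (x.1 ++ y.1, x.2.1 ++ y.2.1, y.2.2)

/-- `δ_≺(F)` : sum over nonempty nontotal admissible cuts whose `Lea` part
contains the rightmost leaf, of `Lea_v F ⊗ Roo_v F`. -/
noncomputable def deltaPrec (F : List PTree) : (List PTree × List PTree) →₀ ℚ :=
  (((cutsF F).filter fun x => x.2.2 && !x.1.isEmpty && !x.2.1.isEmpty).map
    fun x => Finsupp.single (x.1, x.2.1) (1 : ℚ)).sum

/-- `δ_≻(F)` : sum over nonempty nontotal admissible cuts whose `Roo` part
contains the rightmost leaf. -/
noncomputable def deltaSucc (F : List PTree) : (List PTree × List PTree) →₀ ℚ :=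
  (((cutsF F).filter fun x => !x.2.2 && !x.1.isEmpty && !x.2.1.isEmpty).map
    fun x => Finsupp.single (x.1, x.2.1) (1 : ℚ)).sum

/-- The reduced coproduct `δ = δ_≺ + δ_≻`. -/
noncomputable def delta (F : List PTree) : (List PTree × List PTree) →₀ ℚ :=
  deltaPrec F + deltaSucc F


abbrev Cut := List PTree × List PTree × Bool

def mg (x y : Cut) : Cut := (x.1 ++ y.1, x.2.1 ++ y.2.1, y.2.2)

lemma isEmpty_append' {α : Type*} (a b : List α) :
    (a ++ b).isEmpty = (a.isEmpty && b.isEmpty) := by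
  cases a <;> simp

lemma flatMap_ite {α β : Type*} (A : List α) (c : α → Bool) (g : α → List β) :
    (A.flatMap fun x => if c x = true then g x else []) = (A.filter c).flatMap g := by
  induction A with
  | nil => simp
  | cons a A ih => by_cases h : c a <;> simp [List.filter_cons, h, ih]

lemma cutsF_append (F G : List PTree) (hF : F ≠ []) (hG : G ≠ []) :
    cutsF (F ++ G) = (cutsF F).flatMap fun x => (cutsF G).map (mg x) := by
  induction F with
  | nil => exact absurd rfl hF
  | cons t ts ih =>
    obtain ⟨cs⟩ := t
    cases G with
    | nil => exact absurd rfl hG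
    | cons g gs =>
    cases ts with
    | nil => simp only [List.cons_append, List.nil_append, cutsF]; rfl
    | cons t' ts' =>
      have ih' := ih (by simp)
      simp only [List.cons_append] at ih' ⊢
      simp only [cutsF, ih']
      simp only [List.flatMap_map, List.map_flatMap, List.map_map, List.flatMap_assoc]
      have hh : ∀ x a : Cut, ((fun y : Cut =>
          (x.1 ++ y.1, x.2.1 ++ y.2.1, y.2.2)) ∘ mg a) =
          mg (x.1 ++ a.1, x.2.1 ++ a.2.1, a.2.2) := by
        intro x a; funext y; simp [mg, Function.comp, List.append_assoc]
      simp only [hh]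

lemma filterT1 (cs : List PTree)
    (ih : (cutsF cs).filter (fun x => x.1.isEmpty) = [([], cs, false)]) :
    (cutsF [PTree.node cs]).filter (fun x => x.1.isEmpty)
      = [([], [PTree.node cs], false)] := by
  simp only [cutsF, cutsT, List.filter_cons, List.filter_map]
  simp [Function.comp_def, ih]

lemma filterT2 (cs : List PTree) :
    (cutsF [PTree.node cs]).filter (fun x => x.2.1.isEmpty)
      = [([PTree.node cs], [], true)] := by
  simp only [cutsF, cutsT, List.filter_cons, List.filter_map]
  simp [Function.comp_def]

lemma filter1 (F : List PTree) :
    (cutsF F).filter (fun x => x.1.isEmpty) = [([], F, false)] := by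
  induction F using cutsF.induct with
  | case1 => simp [cutsF]
  | case2 cs ih => exact filterT1 cs ih
  | case3 cs t' ts ih2 ih1 =>
    have e : PTree.node cs :: t' :: ts = [PTree.node cs] ++ (t' :: ts) := rfl
    rw [e, cutsF_append _ _ (by simp) (by simp), List.filter_flatMap]
    have h1 : ∀ a : Cut, List.filter (fun x : Cut => x.1.isEmpty)
        (List.map (mg a) (cutsF (t' :: ts))) =
        if a.1.isEmpty = true then
          List.map (mg a) (List.filter (fun x : Cut => x.1.isEmpty) (cutsF (t' :: ts)))
        else [] := by
      intro a
      rw [List.filter_map]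
      by_cases h : a.1.isEmpty
      · simp [h, Function.comp_def, mg, isEmpty_append']
      · rw [Bool.not_eq_true] at h
        simp [h, Function.comp_def, mg, isEmpty_append']
    simp only [h1]
    rw [flatMap_ite, filterT1 cs ih1]
    simp [ih2, mg]

lemma filter2 (F : List PTree) (hF : F ≠ []) :
    (cutsF F).filter (fun x => x.2.1.isEmpty) = [(F, [], true)] := by
  induction F using cutsF.induct with
  | case1 => exact absurd rfl hF
  | case2 cs ih => exact filterT2 cs
  | case3 cs t' ts ih2 ih1 =>
    have e : PTree.node cs :: t' :: ts = [PTree.node cs] ++ (t' :: ts) := rfl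
    rw [e, cutsF_append _ _ (by simp) (by simp), List.filter_flatMap]
    have h1 : ∀ a : Cut, List.filter (fun x : Cut => x.2.1.isEmpty)
        (List.map (mg a) (cutsF (t' :: ts))) =
        if a.2.1.isEmpty = true then
          List.map (mg a) (List.filter (fun x : Cut => x.2.1.isEmpty) (cutsF (t' :: ts)))
        else [] := by
      intro a
      rw [List.filter_map]
      by_cases h : a.2.1.isEmpty
      · simp [h, Function.comp_def, mg, isEmpty_append']
      · rw [Bool.not_eq_true] at h
        simp [h, Function.comp_def, mg, isEmpty_append']
    simp only [h1]
    rw [flatMap_ite, filterT2 cs]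
    simp [ih2 (by simp), mg]

def mN (F : List PTree) : List Cut :=
  (cutsF F).filter fun x => !x.1.isEmpty && !x.2.1.isEmpty

lemma perm_split (F : List PTree) (hF : F ≠ []) :
    (cutsF F).Perm (([], F, false) :: (F, [], true) :: mN F) := by
  have h1 := (List.filter_append_perm (fun x : Cut => x.1.isEmpty) (cutsF F)).symm
  rw [filter1] at h1
  have h3 : ((cutsF F).filter fun x : Cut => !x.1.isEmpty).filter
      (fun x : Cut => x.2.1.isEmpty) = [(F, [], true)] := by
    rw [List.filter_filter]
    have : ((cutsF F).filter fun a : Cut => a.2.1.isEmpty && !a.1.isEmpty)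
        = ((cutsF F).filter fun a : Cut => a.2.1.isEmpty).filter
            (fun a : Cut => !a.1.isEmpty) := by
      rw [List.filter_filter]
      exact List.filter_congr (by intro x _; rw [Bool.and_comm])
    rw [this, filter2 F hF]
    simp [List.filter_cons, hF]
  have h4 : ((cutsF F).filter fun x : Cut => !x.1.isEmpty).filter
      (fun x : Cut => !x.2.1.isEmpty) = mN F := by
    rw [List.filter_filter, mN]
    exact List.filter_congr (by intro x _; rw [Bool.and_comm])
  have h2 := (List.filter_append_perm (fun x : Cut => x.2.1.isEmpty)
    ((cutsF F).filter fun x : Cut => !x.1.isEmpty)).symm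
  rw [h3, h4] at h2
  exact h1.trans (h2.cons _)

noncomputable def sng (x : Cut) : (List PTree × List PTree) →₀ ℚ :=
  Finsupp.single (x.1, x.2.1) 1

lemma L1 {α M : Type*} [AddCommMonoid M] (l : List α) (p : α → Bool) (f : α → M) :
    ((l.filter p).map f).sum = (l.map fun x => if p x = true then f x else 0).sum := by
  induction l with
  | nil => simp
  | cons a l ih => by_cases h : p a <;> simp [List.filter_cons, h, ih]

lemma L2 {α β M : Type*} [AddCommMonoid M] (l : List α) (h : α → List β) (f : β → M) :
    ((l.flatMap h).map f).sum = (l.map fun a => ((h a).map f).sum).sum := by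
  induction l with
  | nil => simp
  | cons a l ih => simp [ih]

lemma L3 {α M : Type*} [AddCommMonoid M] (l : List α) (f g : α → M) :
    (l.map fun x => f x + g x).sum = (l.map f).sum + (l.map g).sum := by
  induction l with
  | nil => simp
  | cons a l ih => simp [ih, add_add_add_comm]

lemma Lsingle {N : Type*} [AddCommMonoid N] (l : List (List PTree × List PTree))
    (h : (List PTree × List PTree) → ℚ → N)
    (h0 : ∀ i, h i 0 = 0) (hadd : ∀ i c d, h i (c + d) = h i c + h i d) :
    ((l.map fun x => Finsupp.single x (1 : ℚ)).sum).sum h = (l.map fun x => h x 1).sum := by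
  induction l with
  | nil => simp [Finsupp.sum_zero_index]
  | cons a l ih =>
    simp only [List.map_cons, List.sum_cons]
    rw [Finsupp.sum_add_index' h0 hadd, Finsupp.sum_single_index (h0 a), ih]

lemma map_congr_mem {M : Type*} [AddCommMonoid M] (H : List PTree) (f g : Cut → M)
    (h : ∀ a : Cut, a.1.isEmpty = false → a.2.1.isEmpty = false → f a = g a) :
    ((mN H).map f).sum = ((mN H).map g).sum := by
  apply congrArg
  apply List.map_congr_left
  intro a ha
  have h2 := (List.mem_filter.mp ha).2
  simp only [Bool.and_eq_true, Bool.not_eq_true'] at h2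
  exact h a h2.1 h2.2

lemma main_split (F G : List PTree) (hF : F ≠ []) (hG : G ≠ []) (p : Cut → Bool) :
    (((cutsF (F ++ G)).filter p).map sng).sum =
      ((if p ([], F ++ G, false) = true then sng ([], F ++ G, false) else 0)
        + ((if p (G, F, true) = true then sng (G, F, true) else 0)
        + ((mN G).map fun b =>
            if p (b.1, F ++ b.2.1, b.2.2) = true then sng (b.1, F ++ b.2.1, b.2.2) else 0).sum))
      + (((if p (F, G, false) = true then sng (F, G, false) else 0)
        + ((if p (F ++ G, [], true) = true then sng (F ++ G, [], true) else 0)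
        + ((mN G).map fun b =>
            if p (F ++ b.1, b.2.1, b.2.2) = true then sng (F ++ b.1, b.2.1, b.2.2) else 0).sum))
      + ((mN F).map fun a =>
          (if p (a.1, a.2.1 ++ G, false) = true then sng (a.1, a.2.1 ++ G, false) else 0)
        + ((if p (a.1 ++ G, a.2.1, true) = true then sng (a.1 ++ G, a.2.1, true) else 0)
        + ((mN G).map fun b =>
            if p (a.1 ++ b.1, a.2.1 ++ b.2.1, b.2.2) = true
            then sng (a.1 ++ b.1, a.2.1 ++ b.2.1, b.2.2) else 0).sum)).sum) := by
  rw [cutsF_append F G hF hG, L1, L2]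
  simp only [List.map_map]
  have hΦ : ∀ a : Cut, ((cutsF G).map
      ((fun x => if p x = true then sng x else 0) ∘ mg a)).sum =
      (if p (a.1, a.2.1 ++ G, false) = true then sng (a.1, a.2.1 ++ G, false) else 0)
      + ((if p (a.1 ++ G, a.2.1, true) = true then sng (a.1 ++ G, a.2.1, true) else 0)
      + ((mN G).map fun b =>
          if p (a.1 ++ b.1, a.2.1 ++ b.2.1, b.2.2) = true
          then sng (a.1 ++ b.1, a.2.1 ++ b.2.1, b.2.2) else 0).sum) := by
    intro a
    rw [((perm_split G hG).map
      ((fun x => if p x = true then sng x else 0) ∘ mg a)).sum_eq]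
    simp [Function.comp_def, mg]
    rfl
  simp only [hΦ]
  rw [((perm_split F hF).map _).sum_eq]
  simp only [List.map_cons, List.sum_cons]
  simp [mg]

lemma deltaPrec_def (F : List PTree) : deltaPrec F =
    (((cutsF F).filter fun x => x.2.2 && !x.1.isEmpty && !x.2.1.isEmpty).map sng).sum := rfl

lemma deltaSucc_def (F : List PTree) : deltaSucc F =
    (((cutsF F).filter fun x => !x.2.2 && !x.1.isEmpty && !x.2.1.isEmpty).map sng).sum := rfl

lemma deltaPrec_eq (F : List PTree) :
    deltaPrec F = (((mN F).filter fun x : Cut => x.2.2).map sng).sum := by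
  rw [deltaPrec_def, mN, List.filter_filter]
  exact congrArg _ (congrArg _ (List.filter_congr (by intro x _; rw [Bool.and_assoc])))

lemma deltaSucc_eq (F : List PTree) :
    deltaSucc F = (((mN F).filter fun x : Cut => !x.2.2).map sng).sum := by
  rw [deltaSucc_def, mN, List.filter_filter]
  exact congrArg _ (congrArg _ (List.filter_congr (by intro x _; rw [Bool.and_assoc])))

lemma delta_eq (F : List PTree) : delta F = ((mN F).map sng).sum := by
  show deltaPrec F + deltaSucc F = _
  rw [deltaPrec_eq, deltaSucc_eq, L1, L1, ← L3]
  apply congrArg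
  apply List.map_congr_left
  intro a _
  cases h : a.2.2 <;> simp [h]

lemma pairmap (l : List Cut) : l.map sng
    = (l.map fun x : Cut => (x.1, x.2.1)).map (fun y => Finsupp.single y (1:ℚ)) := by
  simp [List.map_map, Function.comp_def, sng]

lemma sumD (F : List PTree) (φ : List PTree × List PTree → List PTree × List PTree) :
    (delta F).sum (fun p c => Finsupp.single (φ p) c)
      = ((mN F).map fun a : Cut => Finsupp.single (φ (a.1, a.2.1)) (1:ℚ)).sum := by
  rw [delta_eq, pairmap, Lsingle _ _ (by simp) (by intro i c d; simp [Finsupp.single_add])]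
  simp [List.map_map, Function.comp_def]

lemma sumP (G : List PTree) (φ : List PTree × List PTree → List PTree × List PTree) :
    (deltaPrec G).sum (fun q d => Finsupp.single (φ q) d)
      = ((mN G).map fun b : Cut =>
          if b.2.2 = true then Finsupp.single (φ (b.1, b.2.1)) (1:ℚ) else 0).sum := by
  rw [deltaPrec_eq, pairmap, Lsingle _ _ (by simp) (by intro i c d; simp [Finsupp.single_add])]
  rw [List.map_map]
  rw [show ((fun x => Finsupp.single (φ x) (1:ℚ)) ∘ (fun x : Cut => (x.1, x.2.1)))
      = fun b : Cut => Finsupp.single (φ (b.1, b.2.1)) (1:ℚ) from rfl]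
  rw [L1]

lemma sumS (G : List PTree) (φ : List PTree × List PTree → List PTree × List PTree) :
    (deltaSucc G).sum (fun q d => Finsupp.single (φ q) d)
      = ((mN G).map fun b : Cut =>
          if (!b.2.2) = true then Finsupp.single (φ (b.1, b.2.1)) (1:ℚ) else 0).sum := by
  rw [deltaSucc_eq, pairmap, Lsingle _ _ (by simp) (by intro i c d; simp [Finsupp.single_add])]
  rw [List.map_map]
  rw [show ((fun x => Finsupp.single (φ x) (1:ℚ)) ∘ (fun x : Cut => (x.1, x.2.1)))
      = fun b : Cut => Finsupp.single (φ (b.1, b.2.1)) (1:ℚ) from rfl]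
  rw [L1]

lemma Lzero {α M : Type*} [AddCommMonoid M] (l : List α) :
    (l.map fun _ => (0 : M)).sum = 0 := by
  induction l <;> simp_all


lemma sumCrossP (F G : List PTree) :
    (delta F).sum (fun p c => (deltaPrec G).sum fun q d =>
        Finsupp.single (p.1 ++ q.1, p.2 ++ q.2) (c * d))
      = ((mN F).map fun a : Cut => ((mN G).map fun b : Cut =>
          if b.2.2 = true then Finsupp.single (a.1 ++ b.1, a.2.1 ++ b.2.1) (1:ℚ) else 0).sum).sum := by
  have hin : ∀ u v : List PTree, (deltaPrec G).sum (fun q d =>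
      Finsupp.single (u ++ q.1, v ++ q.2) d) = ((mN G).map fun b : Cut =>
      if b.2.2 = true then Finsupp.single (u ++ b.1, v ++ b.2.1) (1:ℚ) else 0).sum := by
    intro u v; simpa using sumP G (fun q => (u ++ q.1, v ++ q.2))
  rw [delta_eq, pairmap, Lsingle _ _ (by intro i; simp [Finsupp.sum])
    (by intro i c d; simp only [add_mul, Finsupp.single_add]; exact Finsupp.sum_add)]
  simp only [one_mul, List.map_map, Function.comp_def]
  simp only [hin]

open Finsupp in
lemma prec_half (F G : List PTree) (hF : F ≠ []) (hG : G ≠ []) :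
    deltaPrec (F ++ G) =
      single (G, F) 1
      + (delta F).sum (fun p c => single (p.1 ++ G, p.2) c)
      + (deltaPrec G).sum (fun q d => single (F ++ q.1, q.2) d)
      + (deltaPrec G).sum (fun q d => single (q.1, F ++ q.2) d)
      + (delta F).sum (fun p c =>
          (deltaPrec G).sum fun q d => single (p.1 ++ q.1, p.2 ++ q.2) (c * d)) := by
  have hFe : F.isEmpty = false := by cases F <;> simp_all
  have hGe : G.isEmpty = false := by cases G <;> simp_all
  rw [deltaPrec_def, main_split F G hF hG]
  simp only [sng, isEmpty_append', hFe, hGe, Bool.false_and, Bool.and_false, Bool.not_false,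
    Bool.not_true, Bool.true_and, Bool.and_true, Bool.false_or, if_false, if_true,
    List.isEmpty_nil, Lzero, add_zero, zero_add, ite_true, ite_false]
  simp only [Bool.false_eq_true, if_false, zero_add, add_zero]
  have cg1 : ((mN G).map (fun b : Cut => if (b.2.2 && !b.1.isEmpty) = true
      then Finsupp.single (b.1, F ++ b.2.1) (1:ℚ) else 0)).sum
      = ((mN G).map (fun b : Cut => if b.2.2 = true
      then Finsupp.single (b.1, F ++ b.2.1) (1:ℚ) else 0)).sum :=
    map_congr_mem G _ _ (by intro a h1 h2; simp [h1, h2])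
  have cg2 : ((mN G).map (fun b : Cut => if (b.2.2 && !b.2.1.isEmpty) = true
      then Finsupp.single (F ++ b.1, b.2.1) (1:ℚ) else 0)).sum
      = ((mN G).map (fun b : Cut => if b.2.2 = true
      then Finsupp.single (F ++ b.1, b.2.1) (1:ℚ) else 0)).sum :=
    map_congr_mem G _ _ (by intro a h1 h2; simp [h1, h2])
  have cf : ((mN F).map (fun a : Cut =>
      (if (!a.2.1.isEmpty) = true then Finsupp.single (a.1 ++ G, a.2.1) (1:ℚ) else 0)
      + ((mN G).map (fun b : Cut =>
          if (b.2.2 && !(a.1.isEmpty && b.1.isEmpty) && !(a.2.1.isEmpty && b.2.1.isEmpty)) = true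
          then Finsupp.single (a.1 ++ b.1, a.2.1 ++ b.2.1) (1:ℚ) else 0)).sum)).sum
      = ((mN F).map (fun a : Cut => Finsupp.single (a.1 ++ G, a.2.1) (1:ℚ)
      + ((mN G).map (fun b : Cut => if b.2.2 = true
          then Finsupp.single (a.1 ++ b.1, a.2.1 ++ b.2.1) (1:ℚ) else 0)).sum)).sum := by
    refine map_congr_mem F _ _ ?_
    intro a h1 h2
    have hi := map_congr_mem G
      (fun b : Cut =>
        if (b.2.2 && !(a.1.isEmpty && b.1.isEmpty) && !(a.2.1.isEmpty && b.2.1.isEmpty)) = true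
        then Finsupp.single (a.1 ++ b.1, a.2.1 ++ b.2.1) (1:ℚ) else 0)
      (fun b : Cut => if b.2.2 = true
        then Finsupp.single (a.1 ++ b.1, a.2.1 ++ b.2.1) (1:ℚ) else 0)
      (by intro b hb1 hb2; simp [h1, h2, hb1, hb2])
    rw [hi, if_pos (by simp [h2])]
  rw [cg1, cg2, cf, L3]
  have hR2 : (delta F).sum (fun p c => Finsupp.single (p.1 ++ G, p.2) c)
      = ((mN F).map fun a : Cut => Finsupp.single (a.1 ++ G, a.2.1) (1:ℚ)).sum := by
    simpa using sumD F (fun p => (p.1 ++ G, p.2))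
  have hR3 : (deltaPrec G).sum (fun q d => Finsupp.single (F ++ q.1, q.2) d)
      = ((mN G).map fun b : Cut => if b.2.2 = true
          then Finsupp.single (F ++ b.1, b.2.1) (1:ℚ) else 0).sum := by
    simpa using sumP G (fun q => (F ++ q.1, q.2))
  have hR4 : (deltaPrec G).sum (fun q d => Finsupp.single (q.1, F ++ q.2) d)
      = ((mN G).map fun b : Cut => if b.2.2 = true
          then Finsupp.single (b.1, F ++ b.2.1) (1:ℚ) else 0).sum := by
    simpa using sumP G (fun q => (q.1, F ++ q.2))
  rw [hR2, hR3, hR4, sumCrossP F G]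
  abel

lemma sumCrossS (F G : List PTree) :
    (delta F).sum (fun p c => (deltaSucc G).sum fun q d =>
        Finsupp.single (p.1 ++ q.1, p.2 ++ q.2) (c * d))
      = ((mN F).map fun a : Cut => ((mN G).map fun b : Cut =>
          if (!b.2.2) = true then Finsupp.single (a.1 ++ b.1, a.2.1 ++ b.2.1) (1:ℚ) else 0).sum).sum := by
  have hin : ∀ u v : List PTree, (deltaSucc G).sum (fun q d =>
      Finsupp.single (u ++ q.1, v ++ q.2) d) = ((mN G).map fun b : Cut =>
      if (!b.2.2) = true then Finsupp.single (u ++ b.1, v ++ b.2.1) (1:ℚ) else 0).sum := by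
    intro u v; simpa using sumS G (fun q => (u ++ q.1, v ++ q.2))
  rw [delta_eq, pairmap, Lsingle _ _ (by intro i; simp [Finsupp.sum])
    (by intro i c d; simp only [add_mul, Finsupp.single_add]; exact Finsupp.sum_add)]
  simp only [one_mul, List.map_map, Function.comp_def]
  simp only [hin]

open Finsupp in
lemma succ_half (F G : List PTree) (hF : F ≠ []) (hG : G ≠ []) :
    deltaSucc (F ++ G) =
      single (F, G) 1
      + (delta F).sum (fun p c => single (p.1, p.2 ++ G) c)
      + (deltaSucc G).sum (fun q d => single (F ++ q.1, q.2) d)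
      + (deltaSucc G).sum (fun q d => single (q.1, F ++ q.2) d)
      + (delta F).sum (fun p c =>
          (deltaSucc G).sum fun q d => single (p.1 ++ q.1, p.2 ++ q.2) (c * d)) := by
  have hFe : F.isEmpty = false := by cases F <;> simp_all
  have hGe : G.isEmpty = false := by cases G <;> simp_all
  rw [deltaSucc_def, main_split F G hF hG]
  simp only [sng, isEmpty_append', hFe, hGe, Bool.false_and, Bool.and_false, Bool.not_false,
    Bool.not_true, Bool.true_and, Bool.and_true, Bool.false_or, if_false, if_true,
    List.isEmpty_nil, Lzero, add_zero, zero_add, ite_true, ite_false]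
  simp only [Bool.false_eq_true, if_false, zero_add, add_zero]
  have cg1 : ((mN G).map (fun b : Cut => if (!b.2.2 && !b.1.isEmpty) = true
      then Finsupp.single (b.1, F ++ b.2.1) (1:ℚ) else 0)).sum
      = ((mN G).map (fun b : Cut => if (!b.2.2) = true
      then Finsupp.single (b.1, F ++ b.2.1) (1:ℚ) else 0)).sum :=
    map_congr_mem G _ _ (by intro a h1 h2; simp [h1, h2])
  have cg2 : ((mN G).map (fun b : Cut => if (!b.2.2 && !b.2.1.isEmpty) = true
      then Finsupp.single (F ++ b.1, b.2.1) (1:ℚ) else 0)).sum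
      = ((mN G).map (fun b : Cut => if (!b.2.2) = true
      then Finsupp.single (F ++ b.1, b.2.1) (1:ℚ) else 0)).sum :=
    map_congr_mem G _ _ (by intro a h1 h2; simp [h1, h2])
  have cf : ((mN F).map (fun a : Cut =>
      (if (!a.1.isEmpty) = true then Finsupp.single (a.1, a.2.1 ++ G) (1:ℚ) else 0)
      + ((mN G).map (fun b : Cut =>
          if (!b.2.2 && !(a.1.isEmpty && b.1.isEmpty) && !(a.2.1.isEmpty && b.2.1.isEmpty)) = true
          then Finsupp.single (a.1 ++ b.1, a.2.1 ++ b.2.1) (1:ℚ) else 0)).sum)).sum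
      = ((mN F).map (fun a : Cut => Finsupp.single (a.1, a.2.1 ++ G) (1:ℚ)
      + ((mN G).map (fun b : Cut => if (!b.2.2) = true
          then Finsupp.single (a.1 ++ b.1, a.2.1 ++ b.2.1) (1:ℚ) else 0)).sum)).sum := by
    refine map_congr_mem F _ _ ?_
    intro a h1 h2
    have hi := map_congr_mem G
      (fun b : Cut =>
        if (!b.2.2 && !(a.1.isEmpty && b.1.isEmpty) && !(a.2.1.isEmpty && b.2.1.isEmpty)) = true
        then Finsupp.single (a.1 ++ b.1, a.2.1 ++ b.2.1) (1:ℚ) else 0)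
      (fun b : Cut => if (!b.2.2) = true
        then Finsupp.single (a.1 ++ b.1, a.2.1 ++ b.2.1) (1:ℚ) else 0)
      (by intro b hb1 hb2; simp [h1, h2, hb1, hb2])
    rw [hi, if_pos (by simp [h1])]
  rw [cg1, cg2, cf, L3]
  have hR2 : (delta F).sum (fun p c => Finsupp.single (p.1, p.2 ++ G) c)
      = ((mN F).map fun a : Cut => Finsupp.single (a.1, a.2.1 ++ G) (1:ℚ)).sum := by
    simpa using sumD F (fun p => (p.1, p.2 ++ G))
  have hR3 : (deltaSucc G).sum (fun q d => Finsupp.single (F ++ q.1, q.2) d)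
      = ((mN G).map fun b : Cut => if (!b.2.2) = true
          then Finsupp.single (F ++ b.1, b.2.1) (1:ℚ) else 0).sum := by
    simpa using sumS G (fun q => (F ++ q.1, q.2))
  have hR4 : (deltaSucc G).sum (fun q d => Finsupp.single (q.1, F ++ q.2) d)
      = ((mN G).map fun b : Cut => if (!b.2.2) = true
          then Finsupp.single (b.1, F ++ b.2.1) (1:ℚ) else 0).sum := by
    simpa using sumS G (fun q => (q.1, F ++ q.2))
  rw [hR2, hR3, hR4, sumCrossS F G]
  abel


open Finsupp in
/-- The codendriform bialgebra relations for the concatenation product of planar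
forests:
`δ_≺(xy) = y⊗x + x'y⊗x'' + xy'_≺⊗y''_≺ + y'_≺⊗xy''_≺ + x'y'_≺⊗x''y''_≺` and
`δ_≻(xy) = x⊗y + x'⊗x''y + xy'_≻⊗y''_≻ + y'_≻⊗xy''_≻ + x'y'_≻⊗x''y''_≻`
(Sweedler notation, on basis forests `x = F`, `y = G`). -/
theorem planarForests_codendriform (F G : List PTree) (hF : F ≠ []) (hG : G ≠ []) :
    deltaPrec (F ++ G) =
      single (G, F) 1
      + (delta F).sum (fun p c => single (p.1 ++ G, p.2) c)
      + (deltaPrec G).sum (fun q d => single (F ++ q.1, q.2) d)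
      + (deltaPrec G).sum (fun q d => single (q.1, F ++ q.2) d)
      + (delta F).sum (fun p c =>
          (deltaPrec G).sum fun q d => single (p.1 ++ q.1, p.2 ++ q.2) (c * d)) ∧
    deltaSucc (F ++ G) =
      single (F, G) 1
      + (delta F).sum (fun p c => single (p.1, p.2 ++ G) c)
      + (deltaSucc G).sum (fun q d => single (F ++ q.1, q.2) d)
      + (deltaSucc G).sum (fun q d => single (q.1, F ++ q.2) d)
      + (delta F).sum (fun p c =>
          (deltaSucc G).sum fun q d => single (p.1 ++ q.1, p.2 ++ q.2) (c * d)) :=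
  ⟨prec_half F G hF hG, succ_half F G hF hG⟩
end

section
/- In the Hopf algebra of planar forests, for all nonempty planar forests x, y: δ_≺(x ↖ y) = y⊗x + y'_≺⊗(x ↖ y''_≺) + (x'_≺ ↖ y)⊗x''_≺ + x'_≻ y⊗x''_≻ + x'_≻ y'_≺⊗(x''_≻ ↖ y''_≺), and δ_≻(x ↖ y) = y'_≻⊗(x ↖ y''_≻) + x'_≻⊗(x''_≻ ↖ y) + x'_≻ y'_≻⊗(x''_≻ ↖ y''_≻), where ↖ is grafting on the rightmost leaf. -/
section wsum
variable {α β : Type*} {M : Type*} [AddCommMonoid M]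

def wsum (l : List α) (f : α → M) : M := (l.map f).sum

theorem wsum_nil (f : α → M) : wsum ([] : List α) f = 0 := rfl
theorem wsum_cons (a : α) (l : List α) (f : α → M) :
    wsum (a :: l) f = f a + wsum l f := by simp [wsum]
theorem wsum_zero (l : List α) : wsum l (fun _ => (0:M)) = 0 := by simp [wsum]
theorem wsum_add (l : List α) (f g : α → M) :
    wsum l (fun x => f x + g x) = wsum l f + wsum l g := by
  induction l with
  | nil => simp [wsum]
  | cons a l ih => simp only [wsum_cons, ih]; abel
theorem wsum_congr {l : List α} {f g : α → M} (h : ∀ x ∈ l, f x = g x) :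
    wsum l f = wsum l g := by rw [wsum, List.map_congr_left h]; rfl
theorem wsum_map (l : List α) (g : α → β) (f : β → M) :
    wsum (l.map g) f = wsum l (f ∘ g) := by simp [wsum, List.map_map]
theorem wsum_flatMap (l : List α) (g : α → List β) (f : β → M) :
    wsum (l.flatMap g) f = wsum l (fun x => wsum (g x) f) := by
  induction l with
  | nil => simp [wsum]
  | cons a l ih => simp only [List.flatMap_cons, wsum_cons, wsum, List.map_append, List.sum_append]; rw [show (List.map f (l.flatMap g)).sum = wsum (l.flatMap g) f from rfl, ih]; rfl
theorem filter_wsum (l : List α) (p : α → Bool) (f : α → M) :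
    wsum (l.filter p) f = wsum l (fun x => if p x then f x else 0) := by
  induction l with
  | nil => simp [wsum]
  | cons a l ih =>
      by_cases h : p a
      · simp [List.filter_cons, h, wsum_cons, ih]
      · simp [List.filter_cons, h, wsum_cons, ih]
end wsum

theorem sum_listSum {α β : Type*} {M : Type*} [AddCommMonoid M]
    (l : List α) (g : α → β) (h : β → ℚ → M)
    (h0 : ∀ b, h b 0 = 0) (hadd : ∀ b c d, h b (c + d) = h b c + h b d) :
    ((l.map fun x => Finsupp.single (g x) (1:ℚ)).sum).sum h
      = (l.map fun x => h (g x) 1).sum := by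
  induction l with
  | nil => simp [Finsupp.sum_zero_index]
  | cons a l ih =>
      simp only [List.map_cons, List.sum_cons]
      rw [Finsupp.sum_add_index' h0 hadd, Finsupp.sum_single_index (h0 _), ih]

theorem graft_nil : ∀ F : List PTree, graftList F [] = F
  | [] => by rw [graftList]
  | [PTree.node cs] => by rw [graftList, graft_nil cs]
  | PTree.node cs :: t' :: ts => by rw [graftList, graft_nil (t' :: ts)]

theorem graft_ne_nil {F : List PTree} (G : List PTree) (hF : F ≠ []) :
    graftList F G ≠ [] := by
  match F with
  | [PTree.node cs] => rw [graftList]; exact List.cons_ne_nil _ _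
  | PTree.node cs :: t' :: ts => rw [graftList]; exact List.cons_ne_nil _ _

theorem graft_append_s11 (a : List PTree) {b : List PTree} (G : List PTree) (hb : b ≠ []) :
    graftList (a ++ b) G = a ++ graftList b G := by
  induction a with
  | nil => rfl
  | cons h a' ih =>
      obtain ⟨c, rest, hcr⟩ := List.exists_cons_of_ne_nil
        (show a' ++ b ≠ [] by simp [hb])
      rw [List.cons_append, hcr, graftList, ← hcr, ih, List.cons_append]

theorem cuts_lea_ne_nil : ∀ (F : List PTree), ∀ x ∈ cutsF F, x.2.2 = true → x.1 ≠ []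
  | [] => by intro x hx; simp [cutsF] at hx; subst hx; simp
  | [PTree.node cs] => by
      intro x hx hb
      rw [cutsF, cutsT, List.mem_cons] at hx
      rcases hx with hx | hx
      · subst hx; simp
      · simp only [List.mem_map] at hx
        obtain ⟨z, hz, rfl⟩ := hx
        exact cuts_lea_ne_nil cs z hz hb
  | PTree.node cs :: t' :: ts => by
      intro x hx hb
      rw [cutsF] at hx
      simp only [List.mem_flatMap, List.mem_map] at hx
      obtain ⟨x1, _, y, hy, rfl⟩ := hx
      have := cuts_lea_ne_nil (t' :: ts) y hy hb
      simp [this]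

theorem cuts_roo_ne_nil : ∀ (F : List PTree), F ≠ [] →
    ∀ x ∈ cutsF F, x.2.2 = false → x.2.1 ≠ []
  | [] => by intro h; simp at h
  | [PTree.node cs] => by
      intro _ x hx hb
      rw [cutsF, cutsT, List.mem_cons] at hx
      rcases hx with hx | hx
      · subst hx; simp at hb
      · simp only [List.mem_map] at hx
        obtain ⟨z, hz, rfl⟩ := hx
        simp
  | PTree.node cs :: t' :: ts => by
      intro _ x hx hb
      rw [cutsF] at hx
      simp only [List.mem_flatMap, List.mem_map] at hx
      obtain ⟨x1, _, y, hy, rfl⟩ := hx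
      have := cuts_roo_ne_nil (t' :: ts) (by simp) y hy hb
      simp [this]


theorem PTree.sizeOf_pos (t : PTree) : 0 < sizeOf t := by
  cases t with
  | node cs => simp only [PTree.node.sizeOf_spec]; omega

theorem cutsF_one (cs : List PTree) : cutsF [PTree.node cs] = cutsT (cutsF cs) cs := by
  rw [cutsF]

theorem emptyCut {M : Type} [AddCommMonoid M] :
    ∀ (F : List PTree) (f : Cut → M),
      wsum (cutsF F) (fun x => if x.1.isEmpty then f x else 0) = f ([], F, false)
  | [], f => by rw [cutsF]; simp [wsum]
  | [PTree.node cs], f => by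
      rw [cutsF, cutsT, wsum_cons, wsum_map]
      have h2 := emptyCut cs (fun x => f (x.1, [PTree.node x.2.1], x.2.2))
      simp only [List.isEmpty_cons, if_false, Bool.false_eq_true] at *
      rw [show ((fun x : Cut => if x.1.isEmpty then f x else 0) ∘
          fun x : Cut => (x.1, [PTree.node x.2.1], x.2.2)) =
          (fun x : Cut => if x.1.isEmpty then
            f (x.1, [PTree.node x.2.1], x.2.2) else 0) from rfl, h2, zero_add]
  | PTree.node cs :: t' :: ts, f => by
      rw [cutsF, wsum_flatMap]
      have step : ∀ x : Cut,
          wsum ((cutsF (t' :: ts)).map fun y : Cut =>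
              (x.1 ++ y.1, x.2.1 ++ y.2.1, y.2.2))
            (fun z => if z.1.isEmpty then f z else 0)
          = if x.1.isEmpty then f (x.1, x.2.1 ++ (t' :: ts), false) else 0 := by
        rintro ⟨x1, x2, xb⟩
        rw [wsum_map]
        by_cases hx : x1 = []
        · subst hx
          simp only [List.isEmpty_nil, if_true]
          exact emptyCut (t' :: ts) (fun y => f ([] ++ y.1, x2 ++ y.2.1, y.2.2))
        · have hx' : x1.isEmpty = false := List.isEmpty_eq_false_iff.mpr hx
          simp only [hx', Bool.false_eq_true, if_false]
          refine (wsum_congr (fun y _ => ?_)).trans (wsum_zero _)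
          have h3 : x1 ++ y.1 ≠ [] := by simp [hx]
          simp [List.isEmpty_eq_false_iff.mpr h3, hx]
      rw [wsum_congr (fun x _ => step x), ← cutsF_one,
        emptyCut [PTree.node cs] (fun x => f (x.1, x.2.1 ++ (t' :: ts), false))]
      rfl
  termination_by F => sizeOf F
  decreasing_by
    all_goals simp_wf
    all_goals first
      | omega
      | (have := PTree.sizeOf_pos t'; omega)

theorem totalCut {M : Type} [AddCommMonoid M] :
    ∀ (F : List PTree), F ≠ [] → ∀ (f : Cut → M),
      wsum (cutsF F) (fun x => if x.2.1.isEmpty then f x else 0) = f (F, [], true)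
  | [], h, f => absurd rfl h
  | [PTree.node cs], _, f => by
      rw [cutsF, cutsT, wsum_cons, wsum_map]
      rw [show ((fun x : Cut => if x.2.1.isEmpty then f x else 0) ∘
          fun x : Cut => (x.1, [PTree.node x.2.1], x.2.2)) =
          (fun _ : Cut => (0:M)) from funext fun x => by
            simp [List.isEmpty_cons], wsum_zero, add_zero]
      simp
  | PTree.node cs :: t' :: ts, _, f => by
      rw [cutsF, wsum_flatMap]
      have step : ∀ x : Cut,
          wsum ((cutsF (t' :: ts)).map fun y : Cut =>
              (x.1 ++ y.1, x.2.1 ++ y.2.1, y.2.2))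
            (fun z => if z.2.1.isEmpty then f z else 0)
          = if x.2.1.isEmpty then f (x.1 ++ (t' :: ts), x.2.1, true) else 0 := by
        rintro ⟨x1, x2, xb⟩
        rw [wsum_map]
        by_cases hx : x2 = []
        · subst hx
          simp only [List.isEmpty_nil, if_true]
          exact totalCut (t' :: ts) (by simp) (fun y => f (x1 ++ y.1, [] ++ y.2.1, y.2.2))
        · have hx' : x2.isEmpty = false := List.isEmpty_eq_false_iff.mpr hx
          simp only [hx', Bool.false_eq_true, if_false]
          refine (wsum_congr (fun y _ => ?_)).trans (wsum_zero _)
          have h3 : x2 ++ y.2.1 ≠ [] := by simp [hx]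
          simp [List.isEmpty_eq_false_iff.mpr h3, hx]
      rw [wsum_congr (fun x _ => step x), ← cutsF_one,
        totalCut [PTree.node cs] (by simp) (fun x => f (x.1 ++ (t' :: ts), x.2.1, true))]
      rfl
  termination_by F => sizeOf F
  decreasing_by
    all_goals simp_wf
    all_goals first
      | omega
      | (have := PTree.sizeOf_pos t'; omega)

def branchC (G : List PTree) (x : Cut) : List Cut :=
  if x.2.2 then [(graftList x.1 G, x.2.1, true)]
  else (cutsF G).map fun y => (x.1 ++ y.1, graftList x.2.1 y.2.1, y.2.2)

theorem graft_nil_left (G : List PTree) : graftList [] G = G := by rw [graftList]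

theorem graft_one (cs G : List PTree) :
    graftList [PTree.node cs] G = [PTree.node (graftList cs G)] := by rw [graftList]

theorem graft_cons_s11 (t t' : PTree) (ts G : List PTree) :
    graftList (t :: t' :: ts) G = t :: graftList (t' :: ts) G := by rw [graftList]

theorem branch_lift (G : List PTree) (x : Cut) :
    (branchC G x).map (fun z : Cut => (z.1, [PTree.node z.2.1], z.2.2))
      = branchC G (x.1, [PTree.node x.2.1], x.2.2) := by
  rcases x with ⟨x1, x2, b⟩
  cases b
  · simp only [branchC, Bool.false_eq_true, if_false, List.map_map]
    refine List.map_congr_left fun y _ => ?_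
    simp [Function.comp, graft_one]
  · simp [branchC]

theorem key : ∀ (F G : List PTree),
    cutsF (graftList F G) = (cutsF F).flatMap (branchC G)
  | [], G => by
      rw [graft_nil_left, cutsF, List.flatMap_cons, List.flatMap_nil, List.append_nil,
        branchC]
      simp [graft_nil_left]
  | [PTree.node cs], G => by
      rw [graft_one, cutsF_one (graftList cs G), cutsT, key cs G, cutsF_one cs, cutsT,
        List.flatMap_cons, List.map_flatMap, List.flatMap_map]
      have hhead : branchC G ([PTree.node cs], [], true)
          = [([PTree.node (graftList cs G)], [], true)] := by
        simp [branchC, graft_one]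
      rw [hhead, List.singleton_append]
      refine congrArg _ (congrArg (fun f => List.flatMap f _) (funext fun x => ?_))
      exact branch_lift G x
  | PTree.node cs :: t' :: ts, G => by
      have hne : graftList (t' :: ts) G ≠ [] := graft_ne_nil G (by simp)
      obtain ⟨u, us, hu⟩ := List.exists_cons_of_ne_nil hne
      rw [graft_cons_s11, hu, cutsF, ← hu, key (t' :: ts) G, cutsF, List.flatMap_assoc]
      refine congrArg (fun f => List.flatMap f _) (funext fun x1 => ?_)
      rw [List.map_flatMap, List.flatMap_map]
      refine List.flatMap_congr fun x2 hx2 => ?_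
      rcases x2 with ⟨x2L, x2R, b⟩
      cases b
      · have hR : x2R ≠ [] := cuts_roo_ne_nil (t' :: ts) (by simp) _ hx2 rfl
        simp only [branchC, Bool.false_eq_true, if_false, List.map_map]
        refine List.map_congr_left fun y _ => ?_
        simp [Function.comp, graft_append_s11 _ _ hR, List.append_assoc]
      · have hL : x2L ≠ [] := cuts_lea_ne_nil (t' :: ts) _ hx2 rfl
        simp [branchC, graft_append_s11 _ _ hL]
  termination_by F => sizeOf F
  decreasing_by
    all_goals simp_wf
    all_goals first
      | omega
      | (have := PTree.sizeOf_pos t'; omega)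

abbrev MQ := (List PTree × List PTree) →₀ ℚ

theorem deltaPrec_eq_s11 (F : List PTree) :
    deltaPrec F = wsum (cutsF F)
      (fun x => if x.2.2 && !x.1.isEmpty && !x.2.1.isEmpty
        then Finsupp.single (x.1, x.2.1) (1:ℚ) else 0) := by
  rw [deltaPrec, ← filter_wsum]; rfl

theorem deltaSucc_eq_s11 (F : List PTree) :
    deltaSucc F = wsum (cutsF F)
      (fun x => if !x.2.2 && !x.1.isEmpty && !x.2.1.isEmpty
        then Finsupp.single (x.1, x.2.1) (1:ℚ) else 0) := by
  rw [deltaSucc, ← filter_wsum]; rfl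

-- normalization of the Finsupp.sum terms on the RHS into wsum form
theorem sum_delta_wsum (l : List Cut) (φ : List PTree × List PTree → List PTree × List PTree) :
    ((l.map fun x => Finsupp.single (x.1, x.2.1) (1:ℚ)).sum).sum
      (fun p c => Finsupp.single (φ p) c)
      = wsum l (fun x => Finsupp.single (φ (x.1, x.2.1)) (1:ℚ)) := by
  rw [sum_listSum l (fun x => (x.1, x.2.1)) (fun p c => Finsupp.single (φ p) c)
    (fun b => Finsupp.single_zero _) (fun b c d => Finsupp.single_add _ _ _)]
  rfl

theorem sum_delta_wsum2 (l l' : List Cut)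
    (ψ : List PTree × List PTree → List PTree × List PTree → List PTree × List PTree) :
    ((l.map fun x => Finsupp.single (x.1, x.2.1) (1:ℚ)).sum).sum
      (fun p c => ((l'.map fun y => Finsupp.single (y.1, y.2.1) (1:ℚ)).sum).sum
        (fun q d => Finsupp.single (ψ p q) (c * d)))
      = wsum l (fun x => wsum l' (fun y =>
          Finsupp.single (ψ (x.1, x.2.1) (y.1, y.2.1)) (1:ℚ))) := by
  rw [sum_listSum l (fun x => (x.1, x.2.1))
    (fun p c => ((l'.map fun y => Finsupp.single (y.1, y.2.1) (1:ℚ)).sum).sum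
        (fun q d => Finsupp.single (ψ p q) (c * d)))
    (fun b => by simp [Finsupp.sum])
    (fun b c d => by
      simp only [add_mul, Finsupp.single_add]
      rw [Finsupp.sum_add])]
  rw [wsum]
  refine congrArg _ (List.map_congr_left fun x _ => ?_)
  rw [sum_listSum l' (fun y => (y.1, y.2.1)) (fun q d => Finsupp.single (ψ (x.1, x.2.1) q) (1 * d))
    (fun b => by simp) (fun b c d => by simp [mul_add, Finsupp.single_add])]
  simp [wsum]

theorem wsum_split {M : Type} [AddCommMonoid M] (l : List Cut) (h : Cut → M) (c : Cut → Bool) :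
    wsum l h = wsum l (fun x => if c x then h x else 0)
      + wsum l (fun x => if c x then 0 else h x) := by
  rw [← wsum_add]; exact wsum_congr fun x _ => by by_cases hx : c x <;> simp [hx]

theorem half1 (F G : List PTree) (hF : F ≠ []) (hG : G ≠ []) :
    deltaPrec (graftList F G) =
      Finsupp.single (G, F) (1:ℚ)
      + (deltaPrec G).sum (fun q d => Finsupp.single (q.1, graftList F q.2) d)
      + (deltaPrec F).sum (fun p c => Finsupp.single (graftList p.1 G, p.2) c)
      + (deltaSucc F).sum (fun p c => Finsupp.single (p.1 ++ G, p.2) c)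
      + (deltaSucc F).sum (fun p c =>
          (deltaPrec G).sum fun q d =>
            Finsupp.single (p.1 ++ q.1, graftList p.2 q.2) (c * d)) := by
  have hGe : G.isEmpty = false := List.isEmpty_eq_false_iff.mpr hG
  -- RHS normalizations
  have hT2 : (deltaPrec G).sum (fun q d => Finsupp.single (q.1, graftList F q.2) d)
      = wsum (cutsF G) (fun y => if y.2.2 && !y.1.isEmpty && !y.2.1.isEmpty
          then Finsupp.single (y.1, graftList F y.2.1) (1:ℚ) else 0) := by
    rw [deltaPrec, sum_delta_wsum _ (fun p => (p.1, graftList F p.2)), filter_wsum]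
  have hT3 : (deltaPrec F).sum (fun p c => Finsupp.single (graftList p.1 G, p.2) c)
      = wsum (cutsF F) (fun x => if x.2.2 && !x.1.isEmpty && !x.2.1.isEmpty
          then Finsupp.single (graftList x.1 G, x.2.1) (1:ℚ) else 0) := by
    rw [deltaPrec, sum_delta_wsum _ (fun p => (graftList p.1 G, p.2)), filter_wsum]
  have hT4 : (deltaSucc F).sum (fun p c => Finsupp.single (p.1 ++ G, p.2) c)
      = wsum (cutsF F) (fun x => if !x.2.2 && !x.1.isEmpty && !x.2.1.isEmpty
          then Finsupp.single (x.1 ++ G, x.2.1) (1:ℚ) else 0) := by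
    rw [deltaSucc, sum_delta_wsum _ (fun p => (p.1 ++ G, p.2)), filter_wsum]
  have hT5 : (deltaSucc F).sum (fun p c =>
        (deltaPrec G).sum fun q d =>
          Finsupp.single (p.1 ++ q.1, graftList p.2 q.2) (c * d))
      = wsum (cutsF F) (fun x => if !x.2.2 && !x.1.isEmpty && !x.2.1.isEmpty
          then wsum (cutsF G) (fun y => if y.2.2 && !y.1.isEmpty && !y.2.1.isEmpty
            then Finsupp.single (x.1 ++ y.1, graftList x.2.1 y.2.1) (1:ℚ) else 0)
          else 0) := by
    rw [deltaSucc, deltaPrec,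
      sum_delta_wsum2 _ _ (fun p q => (p.1 ++ q.1, graftList p.2 q.2))]
    simp only [filter_wsum]
  -- LHS expansion
  rw [deltaPrec_eq_s11, key F G, wsum_flatMap,
    wsum_split (cutsF F) _ (fun x => x.1.isEmpty),
    emptyCut F (fun x => wsum (branchC G x)
      (fun z => if z.2.2 && !z.1.isEmpty && !z.2.1.isEmpty
        then Finsupp.single (z.1, z.2.1) (1:ℚ) else 0))]
  -- the empty-cut part
  have hA : wsum (branchC G ([], F, false))
        (fun z => if z.2.2 && !z.1.isEmpty && !z.2.1.isEmpty
          then Finsupp.single (z.1, z.2.1) (1:ℚ) else 0)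
      = Finsupp.single (G, F) (1:ℚ)
        + (deltaPrec G).sum (fun q d => Finsupp.single (q.1, graftList F q.2) d) := by
    have hb : branchC G ([], F, false)
        = (cutsF G).map fun y : Cut => (y.1, graftList F y.2.1, y.2.2) := by
      simp [branchC]
    rw [hb, wsum_map]
    have e1 : ∀ y ∈ cutsF G, ((fun z : Cut =>
          if z.2.2 && !z.1.isEmpty && !z.2.1.isEmpty
            then Finsupp.single (z.1, z.2.1) (1:ℚ) else 0)
        ∘ (fun y : Cut => (y.1, graftList F y.2.1, y.2.2))) y
        = (fun y : Cut => if y.2.2 && !y.1.isEmpty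
            then Finsupp.single (y.1, graftList F y.2.1) (1:ℚ) else 0) y := by
      intro y _
      have hg : (graftList F y.2.1).isEmpty = false :=
        List.isEmpty_eq_false_iff.mpr (graft_ne_nil _ hF)
      simp only [Function.comp_apply, hg, Bool.not_false, Bool.and_true]
    rw [wsum_congr e1,
      wsum_split (cutsF G) _ (fun y => y.2.1.isEmpty),
      totalCut G hG (fun y : Cut => if y.2.2 && !y.1.isEmpty
        then Finsupp.single (y.1, graftList F y.2.1) (1:ℚ) else 0),
      hT2]
    congr 1
    · simp [hGe, graft_nil]
    · refine wsum_congr fun y _ => ?_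
      by_cases h1 : y.2.1.isEmpty <;> by_cases h2 : y.2.2 <;>
        by_cases h3 : y.1.isEmpty <;> simp [h1, h2, h3]
  rw [hA]
  -- the nonempty part
  have hB : wsum (cutsF F) (fun x => if x.1.isEmpty then 0 else
        wsum (branchC G x)
          (fun z => if z.2.2 && !z.1.isEmpty && !z.2.1.isEmpty
            then Finsupp.single (z.1, z.2.1) (1:ℚ) else 0))
      = (deltaPrec F).sum (fun p c => Finsupp.single (graftList p.1 G, p.2) c)
        + ((deltaSucc F).sum (fun p c => Finsupp.single (p.1 ++ G, p.2) c)
        + (deltaSucc F).sum (fun p c =>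
            (deltaPrec G).sum fun q d =>
              Finsupp.single (p.1 ++ q.1, graftList p.2 q.2) (c * d))) := by
    have e : ∀ x ∈ cutsF F, (if x.1.isEmpty then 0 else
          wsum (branchC G x)
            (fun z => if z.2.2 && !z.1.isEmpty && !z.2.1.isEmpty
              then Finsupp.single (z.1, z.2.1) (1:ℚ) else 0))
        = (if x.2.2 && !x.1.isEmpty && !x.2.1.isEmpty
            then Finsupp.single (graftList x.1 G, x.2.1) (1:ℚ) else 0)
          + ((if !x.2.2 && !x.1.isEmpty && !x.2.1.isEmpty
            then Finsupp.single (x.1 ++ G, x.2.1) (1:ℚ) else 0)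
          + (if !x.2.2 && !x.1.isEmpty && !x.2.1.isEmpty
            then wsum (cutsF G) (fun y => if y.2.2 && !y.1.isEmpty && !y.2.1.isEmpty
              then Finsupp.single (x.1 ++ y.1, graftList x.2.1 y.2.1) (1:ℚ) else 0)
            else 0)) := by
      intro x hx
      by_cases hx1 : x.1 = []
      · have hxe : x.1.isEmpty = true := by simp [hx1]
        simp [hxe]
      · have hxe : x.1.isEmpty = false := List.isEmpty_eq_false_iff.mpr hx1
        cases hb : x.2.2 with
        | true =>
          have hgne : (graftList x.1 G).isEmpty = false :=
            List.isEmpty_eq_false_iff.mpr (graft_ne_nil _ hx1)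
          by_cases h21 : x.2.1 = [] <;>
            simp [branchC, hb, hxe, hgne, h21, wsum, graft_ne_nil _ hx1]
        | false =>
          have h21 : x.2.1 ≠ [] := cuts_roo_ne_nil F hF x hx hb
          have h21e : x.2.1.isEmpty = false := List.isEmpty_eq_false_iff.mpr h21
          have hbr : branchC G x = (cutsF G).map fun y : Cut =>
              (x.1 ++ y.1, graftList x.2.1 y.2.1, y.2.2) := by
            simp [branchC, hb]
          rw [hbr, wsum_map]
          have e2 : ∀ y ∈ cutsF G, ((fun z : Cut =>
                if z.2.2 && !z.1.isEmpty && !z.2.1.isEmpty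
                  then Finsupp.single (z.1, z.2.1) (1:ℚ) else 0)
              ∘ (fun y : Cut => (x.1 ++ y.1, graftList x.2.1 y.2.1, y.2.2))) y
              = (fun y : Cut => if y.2.2
                  then Finsupp.single (x.1 ++ y.1, graftList x.2.1 y.2.1) (1:ℚ) else 0) y := by
            intro y _
            have ha : (x.1 ++ y.1).isEmpty = false :=
              List.isEmpty_eq_false_iff.mpr (by simp [hx1])
            have hg : (graftList x.2.1 y.2.1).isEmpty = false :=
              List.isEmpty_eq_false_iff.mpr (graft_ne_nil _ h21)
            simp only [Function.comp_apply, ha, hg, Bool.not_false, Bool.and_true]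
          rw [wsum_congr e2,
            wsum_split (cutsF G) _ (fun y => y.2.1.isEmpty),
            totalCut G hG (fun y : Cut => if y.2.2
              then Finsupp.single (x.1 ++ y.1, graftList x.2.1 y.2.1) (1:ℚ) else 0)]
          simp only [hxe, hb, Bool.not_false, Bool.not_true, Bool.true_and,
            Bool.and_true, Bool.false_and, Bool.and_false, if_false, h21e,
            Bool.false_eq_true, if_true, zero_add]
          congr 1
          · simp [hGe, graft_nil]
          · refine wsum_congr fun y hy => ?_
            by_cases h1 : y.2.1.isEmpty
            · simp [h1]
            · cases h2 : y.2.2 with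
              | true =>
                have hyl : y.1.isEmpty = false :=
                  List.isEmpty_eq_false_iff.mpr (cuts_lea_ne_nil G y hy h2)
                simp [h1, h2, hyl]
              | false => simp [h1, h2]
    rw [wsum_congr e, wsum_add, wsum_add, ← hT3, ← hT4, ← hT5]
  rw [hB]
  abel

theorem half2 (F G : List PTree) (hF : F ≠ []) (hG : G ≠ []) :
    deltaSucc (graftList F G) =
      (deltaSucc G).sum (fun q d => Finsupp.single (q.1, graftList F q.2) d)
      + (deltaSucc F).sum (fun p c => Finsupp.single (p.1, graftList p.2 G) c)
      + (deltaSucc F).sum (fun p c =>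
          (deltaSucc G).sum fun q d =>
            Finsupp.single (p.1 ++ q.1, graftList p.2 q.2) (c * d)) := by
  have hT1 : (deltaSucc G).sum (fun q d => Finsupp.single (q.1, graftList F q.2) d)
      = wsum (cutsF G) (fun y => if !y.2.2 && !y.1.isEmpty && !y.2.1.isEmpty
          then Finsupp.single (y.1, graftList F y.2.1) (1:ℚ) else 0) := by
    rw [deltaSucc, sum_delta_wsum _ (fun p => (p.1, graftList F p.2)), filter_wsum]
  have hT2 : (deltaSucc F).sum (fun p c => Finsupp.single (p.1, graftList p.2 G) c)
      = wsum (cutsF F) (fun x => if !x.2.2 && !x.1.isEmpty && !x.2.1.isEmpty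
          then Finsupp.single (x.1, graftList x.2.1 G) (1:ℚ) else 0) := by
    rw [deltaSucc, sum_delta_wsum _ (fun p => (p.1, graftList p.2 G)), filter_wsum]
  have hT3 : (deltaSucc F).sum (fun p c =>
        (deltaSucc G).sum fun q d =>
          Finsupp.single (p.1 ++ q.1, graftList p.2 q.2) (c * d))
      = wsum (cutsF F) (fun x => if !x.2.2 && !x.1.isEmpty && !x.2.1.isEmpty
          then wsum (cutsF G) (fun y => if !y.2.2 && !y.1.isEmpty && !y.2.1.isEmpty
            then Finsupp.single (x.1 ++ y.1, graftList x.2.1 y.2.1) (1:ℚ) else 0)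
          else 0) := by
    rw [deltaSucc, deltaSucc,
      sum_delta_wsum2 _ _ (fun p q => (p.1 ++ q.1, graftList p.2 q.2))]
    simp only [filter_wsum]
  rw [deltaSucc_eq_s11, key F G, wsum_flatMap,
    wsum_split (cutsF F) _ (fun x => x.1.isEmpty),
    emptyCut F (fun x => wsum (branchC G x)
      (fun z => if !z.2.2 && !z.1.isEmpty && !z.2.1.isEmpty
        then Finsupp.single (z.1, z.2.1) (1:ℚ) else 0))]
  have hA : wsum (branchC G ([], F, false))
        (fun z => if !z.2.2 && !z.1.isEmpty && !z.2.1.isEmpty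
          then Finsupp.single (z.1, z.2.1) (1:ℚ) else 0)
      = (deltaSucc G).sum (fun q d => Finsupp.single (q.1, graftList F q.2) d) := by
    have hb : branchC G ([], F, false)
        = (cutsF G).map fun y : Cut => (y.1, graftList F y.2.1, y.2.2) := by
      simp [branchC]
    rw [hb, wsum_map, hT1]
    refine wsum_congr fun y hy => ?_
    have hg : (graftList F y.2.1).isEmpty = false :=
      List.isEmpty_eq_false_iff.mpr (graft_ne_nil _ hF)
    simp only [Function.comp_apply, hg, Bool.not_false, Bool.and_true]
    cases h2 : y.2.2 with
    | true => simp [h2]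
    | false =>
      have h21e : y.2.1.isEmpty = false :=
        List.isEmpty_eq_false_iff.mpr (cuts_roo_ne_nil G hG y hy h2)
      by_cases h1 : y.1.isEmpty <;> simp [h1, h21e]
  rw [hA]
  have hB : wsum (cutsF F) (fun x => if x.1.isEmpty then 0 else
        wsum (branchC G x)
          (fun z => if !z.2.2 && !z.1.isEmpty && !z.2.1.isEmpty
            then Finsupp.single (z.1, z.2.1) (1:ℚ) else 0))
      = (deltaSucc F).sum (fun p c => Finsupp.single (p.1, graftList p.2 G) c)
        + (deltaSucc F).sum (fun p c =>
            (deltaSucc G).sum fun q d =>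
              Finsupp.single (p.1 ++ q.1, graftList p.2 q.2) (c * d)) := by
    have e : ∀ x ∈ cutsF F, (if x.1.isEmpty then 0 else
          wsum (branchC G x)
            (fun z => if !z.2.2 && !z.1.isEmpty && !z.2.1.isEmpty
              then Finsupp.single (z.1, z.2.1) (1:ℚ) else 0))
        = (if !x.2.2 && !x.1.isEmpty && !x.2.1.isEmpty
            then Finsupp.single (x.1, graftList x.2.1 G) (1:ℚ) else 0)
          + (if !x.2.2 && !x.1.isEmpty && !x.2.1.isEmpty
            then wsum (cutsF G) (fun y => if !y.2.2 && !y.1.isEmpty && !y.2.1.isEmpty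
              then Finsupp.single (x.1 ++ y.1, graftList x.2.1 y.2.1) (1:ℚ) else 0)
            else 0) := by
      intro x hx
      by_cases hx1 : x.1 = []
      · have hxe : x.1.isEmpty = true := by simp [hx1]
        simp [hxe]
      · have hxe : x.1.isEmpty = false := List.isEmpty_eq_false_iff.mpr hx1
        cases hb : x.2.2 with
        | true => simp [branchC, hb, hxe, wsum]
        | false =>
          have h21 : x.2.1 ≠ [] := cuts_roo_ne_nil F hF x hx hb
          have h21e : x.2.1.isEmpty = false := List.isEmpty_eq_false_iff.mpr h21
          have hbr : branchC G x = (cutsF G).map fun y : Cut =>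
              (x.1 ++ y.1, graftList x.2.1 y.2.1, y.2.2) := by
            simp [branchC, hb]
          rw [hbr, wsum_map]
          have e2 : ∀ y ∈ cutsF G, ((fun z : Cut =>
                if !z.2.2 && !z.1.isEmpty && !z.2.1.isEmpty
                  then Finsupp.single (z.1, z.2.1) (1:ℚ) else 0)
              ∘ (fun y : Cut => (x.1 ++ y.1, graftList x.2.1 y.2.1, y.2.2))) y
              = (fun y : Cut => if !y.2.2
                  then Finsupp.single (x.1 ++ y.1, graftList x.2.1 y.2.1) (1:ℚ) else 0) y := by
            intro y _
            have ha : (x.1 ++ y.1).isEmpty = false :=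
              List.isEmpty_eq_false_iff.mpr (by simp [hx1])
            have hg : (graftList x.2.1 y.2.1).isEmpty = false :=
              List.isEmpty_eq_false_iff.mpr (graft_ne_nil _ h21)
            simp only [Function.comp_apply, ha, hg, Bool.not_false, Bool.and_true]
          rw [wsum_congr e2,
            wsum_split (cutsF G) _ (fun y => y.1.isEmpty),
            emptyCut G (fun y : Cut => if !y.2.2
              then Finsupp.single (x.1 ++ y.1, graftList x.2.1 y.2.1) (1:ℚ) else 0)]
          simp only [hxe, hb, Bool.not_false, Bool.true_and,
            Bool.and_true, h21e, if_true, Bool.false_eq_true, if_false]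
          congr 1
          · simp
          · refine wsum_congr fun y hy => ?_
            by_cases h1 : y.1.isEmpty
            · simp [h1]
            · cases h2 : y.2.2 with
              | true => simp [h1, h2]
              | false =>
                have hyr : y.2.1.isEmpty = false :=
                  List.isEmpty_eq_false_iff.mpr (cuts_roo_ne_nil G hG y hy h2)
                simp [h1, h2, hyr]
    rw [wsum_congr e, wsum_add, ← hT2, ← hT3]
  rw [hB]
  abel


open Finsupp in
/-- Compatibility of the rightmost-leaf grafting `↖` with the dendriform
half-coproducts:
`δ_≺(x↖y) = y⊗x + y'_≺⊗(x↖y''_≺) + (x'_≺↖y)⊗x''_≺ + x'_≻y⊗x''_≻ + x'_≻y'_≺⊗(x''_≻↖y''_≺)`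
and
`δ_≻(x↖y) = y'_≻⊗(x↖y''_≻) + x'_≻⊗(x''_≻↖y) + x'_≻y'_≻⊗(x''_≻↖y''_≻)`
(on basis forests `x = F`, `y = G`). -/
theorem planarForests_graft_codendriform (F G : List PTree)
    (hF : F ≠ []) (hG : G ≠ []) :
    deltaPrec (graftList F G) =
      single (G, F) 1
      + (deltaPrec G).sum (fun q d => single (q.1, graftList F q.2) d)
      + (deltaPrec F).sum (fun p c => single (graftList p.1 G, p.2) c)
      + (deltaSucc F).sum (fun p c => single (p.1 ++ G, p.2) c)
      + (deltaSucc F).sum (fun p c =>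
          (deltaPrec G).sum fun q d => single (p.1 ++ q.1, graftList p.2 q.2) (c * d)) ∧
    deltaSucc (graftList F G) =
      (deltaSucc G).sum (fun q d => single (q.1, graftList F q.2) d)
      + (deltaSucc F).sum (fun p c => single (p.1, graftList p.2 G) c)
      + (deltaSucc F).sum (fun p c =>
          (deltaSucc G).sum fun q d => single (p.1 ++ q.1, graftList p.2 q.2) (c * d)) :=
  ⟨half1 F G hF hG, half2 F G hF hG⟩
end

section
/- On the augmentation ideal of PQSym^cop, define for a parking function σ of degree n with m_σ the maximal index i where σ(i) is maximal: δ_≺(σ) = Σ_{k=1}^{m_σ−1} Std(σ(k+1),…,σ(n)) ⊗ Std(σ(1),…,σ(k)) and δ_≻(σ) = Σ_{k=m_σ}^{n−1} Std(σ(k+1),…,σ(n)) ⊗ Std(σ(1),…,σ(k)). Then δ_≺ + δ_≻ equals the reduced coopposite coproduct of PQSym, and (PQSym^cop)_+ with these coproducts is a dendriform coalgebra. -/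
/-- A word `w` of length `n` on positive integers is a parking function if its
increasing rearrangement `(a'_1, …, a'_n)` satisfies `a'_i ≤ i` for all `i`. -/
def IsPark {n : ℕ} (w : Fin n → ℕ) : Prop :=
  (∀ j, 1 ≤ w j) ∧ ∃ σ : Equiv.Perm (Fin n),
    Monotone (w ∘ σ) ∧ ∀ i : Fin n, w (σ i) ≤ (i : ℕ) + 1

/-- Auxiliary construction for parkization, on the sorted list of letters. -/
def buildU : List ℕ → ℕ → ℕ → ℕ → List ℕ
  | [], _, _, _ => []
  | a :: rest, pv, pu, k =>
      let ua := if a = pv then pu else min (pu + (a - pv)) k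
      ua :: buildU rest a ua (k + 1)

/-- The parkization of a word: letters are pushed down minimally so as to obtain
a parking function, preserving relative order and ties. -/
def parkize {n : ℕ} (w : Fin n → ℕ) : Fin n → ℕ :=
  let v := (List.ofFn w).mergeSort (· ≤ ·)
  let u := buildU v 0 0 1
  fun i => u.getD (v.idxOf (w i)) 0

/-- `m_σ − 1` : the maximal (0-based) index at which a word takes its maximal
value. -/
noncomputable def mIdx {n : ℕ} (w : Fin n → ℕ) : ℕ :=
  sSup {i : ℕ | ∃ h : i < n, ∀ j, w j ≤ w ⟨i, h⟩}

/-- The prefix of length `k` of a word. -/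
def preW {a : ℕ} (w : Fin a → ℕ) (k : ℕ) : Fin (min k a) → ℕ :=
  fun i => w ⟨i.1, by omega⟩

/-- The suffix after position `k` of a word. -/
def sufW {a : ℕ} (w : Fin a → ℕ) (k : ℕ) : Fin (a - k) → ℕ :=
  fun i => w ⟨k + i.1, by omega⟩

/-- Words of all degrees (basis-indexing type for `PQSym`). -/
def W : Type := Σ n : ℕ, (Fin n → ℕ)

/-- `δ_≺(σ) = Σ_{k=1}^{m_σ−1} Park(σ(k+1)…σ(n)) ⊗ Park(σ(1)…σ(k))`. -/
noncomputable def dPrec : W → (W × W) →₀ ℚ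
  | ⟨a, w⟩ => ∑ k ∈ Finset.Icc 1 (mIdx w),
      Finsupp.single (⟨a - k, parkize (sufW w k)⟩, ⟨min k a, parkize (preW w k)⟩) 1

/-- `δ_≻(σ) = Σ_{k=m_σ}^{n−1} Park(σ(k+1)…σ(n)) ⊗ Park(σ(1)…σ(k))`. -/
noncomputable def dSucc : W → (W × W) →₀ ℚ
  | ⟨a, w⟩ => ∑ k ∈ Finset.Icc (mIdx w + 1) (a - 1),
      Finsupp.single (⟨a - k, parkize (sufW w k)⟩, ⟨min k a, parkize (preW w k)⟩) 1

/-- `δ = δ_≺ + δ_≻`. -/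
noncomputable def dFull (x : W) : (W × W) →₀ ℚ := dPrec x + dSucc x

/-- Apply a coproduct to the left tensor factor. -/
noncomputable def applyLeft (D : W → (W × W) →₀ ℚ) (u : (W × W) →₀ ℚ) :
    (W × W × W) →₀ ℚ :=
  u.sum fun p c => (D p.1).sum fun q d => Finsupp.single (q.1, q.2, p.2) (c * d)

/-- Apply a coproduct to the right tensor factor. -/
noncomputable def applyRight (D : W → (W × W) →₀ ℚ) (u : (W × W) →₀ ℚ) :
    (W × W × W) →₀ ℚ :=
  u.sum fun p c => (D p.2).sum fun q d => Finsupp.single (p.1, q.1, q.2) (c * d)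


/- ## bottom-up min of f over {0,…,j} -/
def infB : (ℕ → ℕ) → ℕ → ℕ
  | f, 0 => f 0
  | f, j+1 => min (f 0) (infB (fun i => f (i+1)) j)

lemma infB_le (f : ℕ → ℕ) (j i : ℕ) (h : i ≤ j) : infB f j ≤ f i := by
  induction j generalizing f i with
  | zero => interval_cases i; simp [infB]
  | succ j ih =>
    rcases Nat.eq_zero_or_pos i with h0 | h0
    · subst h0; simp [infB]
    · obtain ⟨i', rfl⟩ : ∃ i', i = i' + 1 := ⟨i - 1, by omega⟩
      calc infB f (j+1) ≤ infB (fun i => f (i+1)) j := by simp [infB]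
        _ ≤ f (i' + 1) := ih _ _ (by omega)

lemma infB_exists (f : ℕ → ℕ) (j : ℕ) : ∃ i ≤ j, infB f j = f i := by
  induction j generalizing f with
  | zero => exact ⟨0, le_rfl, rfl⟩
  | succ j ih =>
    obtain ⟨i, hi, he⟩ := ih (fun i => f (i+1))
    rcases le_total (f 0) (infB (fun i => f (i+1)) j) with h | h
    · exact ⟨0, by omega, by simp [infB]; omega⟩
    · exact ⟨i + 1, by omega, by simp [infB]; omega⟩

lemma buildU_length (v : List ℕ) (pv pu k : ℕ) :
    (buildU v pv pu k).length = v.length := by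
  induction v generalizing pv pu k with
  | nil => rfl
  | cons a rest ih => simp [buildU, ih]

lemma buildU_getD (v : List ℕ) (pv pu k : ℕ)
    (hs : List.Pairwise (· ≤ ·) v) (hpv : ∀ x ∈ v, pv ≤ x) (hpk : pu ≤ k)
    (j : ℕ) (hj : j < v.length) :
    (buildU v pv pu k).getD j 0
      = min (pu + (v.getD j 0 - pv))
          (infB (fun i => k + i + (v.getD j 0 - v.getD i 0)) j) := by
  induction v generalizing pv pu k j with
  | nil => simp at hj
  | cons a rest ih =>
    obtain ⟨ha, hrest⟩ := List.pairwise_cons.1 hs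
    have hpa : pv ≤ a := hpv a (by simp)
    have hua : (if a = pv then pu else min (pu + (a - pv)) k) ≤ k := by
      split <;> omega
    cases j with
    | zero =>
      simp only [buildU, List.getD_cons_zero, infB]
      split <;> omega
    | succ j =>
      have hj' : j < rest.length := by simpa using hj
      have harj : a ≤ rest.getD j 0 := by
        rw [List.getD_eq_getElem _ _ hj']; exact ha _ (List.getElem_mem _)
      simp only [buildU, List.getD_cons_succ]
      rw [ih a _ (k+1) hrest (fun x hx => ha x hx) (by omega) j hj']
      simp only [infB, List.getD_cons_zero, List.getD_cons_succ]
      have : (fun i => k + 1 + i + (rest.getD j 0 - rest.getD i 0))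
           = (fun i => k + (i+1) + (rest.getD j 0 - rest.getD i 0)) := by
        funext i; ring_nf
      rw [this]
      split
      · omega
      · omega

/- ## counting and the closed formula -/
def cntLt {n : ℕ} (w : Fin n → ℕ) (b : ℕ) : ℕ :=
  (Finset.univ.filter (fun l => w l < b)).card

def pkTerm {n : ℕ} (w : Fin n → ℕ) (a b : ℕ) : ℕ := cntLt w b + 1 + (a - b)

noncomputable def pkF {n : ℕ} (w : Fin n → ℕ) (a : ℕ) : ℕ :=
  sInf (pkTerm w a '' Set.Icc 1 a)

lemma pkF_le {n : ℕ} (w : Fin n → ℕ) {a b : ℕ} (hb1 : 1 ≤ b) (hba : b ≤ a) :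
    pkF w a ≤ pkTerm w a b :=
  Nat.sInf_le ⟨b, ⟨hb1, hba⟩, rfl⟩

lemma pkF_exists {n : ℕ} (w : Fin n → ℕ) {a : ℕ} (ha : 1 ≤ a) :
    ∃ b, 1 ≤ b ∧ b ≤ a ∧ pkF w a = pkTerm w a b := by
  obtain ⟨b, hb, he⟩ := Nat.sInf_mem (s := pkTerm w a '' Set.Icc 1 a)
    ⟨_, ⟨a, ⟨ha, le_rfl⟩, rfl⟩⟩
  exact ⟨b, hb.1, hb.2, he.symm⟩

lemma countP_ofFn {n : ℕ} (w : Fin n → ℕ) (p : ℕ → Bool) :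
    (List.ofFn w).countP p = (Finset.univ.filter (fun i => p (w i))).card := by
  induction n with
  | zero => simp
  | succ m ih =>
    rw [List.ofFn_succ, List.countP_cons, Finset.card_filter, Fin.sum_univ_succ,
      ← Finset.card_filter, ih]
    rcases h : p (w 0) <;> simp [h, add_comm]

lemma sorted_getD_mono {v : List ℕ} (hs : List.Pairwise (· ≤ ·) v) {i j : ℕ}
    (hij : i ≤ j) (hj : j < v.length) : v.getD i 0 ≤ v.getD j 0 := by
  rcases eq_or_lt_of_le hij with rfl | hlt
  · exact le_rfl
  · rw [List.getD_eq_getElem _ _ (by omega), List.getD_eq_getElem _ _ hj]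
    exact List.pairwise_iff_getElem.1 hs i j (by omega) hj hlt

lemma sorted_count {v : List ℕ} (hs : List.Pairwise (· ≤ ·) v) (b : ℕ) {i : ℕ}
    (hi : i < v.length) :
    v.getD i 0 < b ↔ i < v.countP (fun x => decide (x < b)) := by
  constructor
  · intro h
    have h1 : ((v.take (i+1)).countP (fun x => decide (x < b))) = i + 1 := by
      rw [List.countP_eq_length.2, List.length_take]
      · omega
      · intro x hx
        obtain ⟨j, hj, rfl⟩ := List.mem_take_iff_getElem.1 hx
        have hji : j ≤ i := by simp at hj; omega
        have : v[j] ≤ v.getD i 0 := by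
          have := sorted_getD_mono hs hji hi
          rwa [List.getD_eq_getElem _ _ (by omega)] at this
        simp; omega
    calc i < (v.take (i+1)).countP (fun x => decide (x < b)) := by omega
      _ ≤ v.countP (fun x => decide (x < b)) :=
        (List.take_sublist _ _).countP_le
  · intro h
    by_contra hc
    push_neg at hc
    rw [List.getD_eq_getElem _ _ (by omega)] at hc
    have h2 : ((v.drop i).countP (fun x => decide (x < b))) = 0 := by
      rw [List.countP_eq_zero]
      intro x hx
      obtain ⟨j, hj, rfl⟩ := List.mem_iff_getElem.1 hx
      rw [List.getElem_drop]
      have hlen : i + j < v.length := by rw [List.length_drop] at hj; omega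
      have : v.getD i 0 ≤ v.getD (i + j) 0 := sorted_getD_mono hs (by omega) hlen
      rw [List.getD_eq_getElem _ _ (by omega), List.getD_eq_getElem _ _ hlen] at this
      simp only [decide_eq_true_eq]
      omega
    have h3 : v.countP (fun x => decide (x < b))
        = (v.take i).countP (fun x => decide (x < b))
          + (v.drop i).countP (fun x => decide (x < b)) := by
      rw [← List.countP_append, List.take_append_drop]
    have h4 : (v.take i).countP (fun x => decide (x < b)) ≤ i := by
      calc (v.take i).countP (fun x => decide (x < b)) ≤ (v.take i).length :=
        List.countP_le_length
      _ ≤ i := by simp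
    omega

lemma parkize_eq {n : ℕ} (w : Fin n → ℕ) (hpos : ∀ j, 1 ≤ w j) (i : Fin n) :
    parkize w i = pkF w (w i) := by
  have hpos' : 1 ≤ w i := hpos i
  set v := (List.ofFn w).mergeSort (· ≤ ·) with hv
  have hperm : v.Perm (List.ofFn w) := List.mergeSort_perm _ _
  have hsort : List.Pairwise (· ≤ ·) v := by
    have := List.pairwise_mergeSort (le := fun a b : ℕ => decide (a ≤ b))
      (fun a b c h1 h2 => by simp at h1 h2 ⊢; omega)
      (fun a b => by simp; omega) (List.ofFn w)
    exact List.Pairwise.imp (by simp) this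
  have hmem : w i ∈ v := hperm.mem_iff.2 (by simp [List.mem_ofFn])
  set j := v.idxOf (w i) with hj
  have hjlen : j < v.length := List.idxOf_lt_length_iff.2 hmem
  have hvj : v.getD j 0 = w i := by
    rw [List.getD_eq_getElem _ _ hjlen]; exact List.getElem_idxOf hjlen
  have hvpos : ∀ x ∈ v, 1 ≤ x := by
    intro x hx
    rw [hperm.mem_iff, List.mem_ofFn] at hx
    obtain ⟨l, rfl⟩ := hx
    exact hpos l
  have hcount : ∀ b : ℕ, v.countP (fun x => decide (x < b)) = cntLt w b := by
    intro b
    rw [hperm.countP_eq, countP_ofFn]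
    simp [cntLt]
  show (buildU v 0 0 1).getD j 0 = pkF w (w i)
  rw [buildU_getD v 0 0 1 hsort (fun x _ => Nat.zero_le x) (by omega) j hjlen]
  rw [hvj]
  set X := infB (fun i' => 1 + i' + (w i - v.getD i' 0)) j with hX
  apply le_antisymm
  · -- min (0 + (w i - 0)) X ≤ pkF
    obtain ⟨b, hb1, hba, hbe⟩ := pkF_exists w hpos'
    set c := cntLt w b with hc
    have hcj : c ≤ j := by
      have := (sorted_count hsort b hjlen).not
      rw [hvj, hcount] at this
      omega
    have hclen : c < v.length := by omega
    have hvcb : b ≤ v.getD c 0 := by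
      have := (sorted_count hsort b hclen).not
      rw [hcount] at this
      omega
    have hvcj : v.getD c 0 ≤ w i := by
      have := sorted_getD_mono hsort hcj hjlen; omega
    have : X ≤ 1 + c + (w i - v.getD c 0) := by
      rw [hX]; exact infB_le _ _ _ hcj
    have hterm : pkTerm w (w i) b = c + 1 + (w i - b) := rfl
    omega
  · -- pkF ≤ min (w i) X
    have hle1 : pkF w (w i) ≤ w i := by
      have h1 : cntLt w 1 = 0 := by
        rw [cntLt, Finset.card_eq_zero, Finset.filter_eq_empty_iff]
        intro l _
        have := hpos l; omega
      have h2 := pkF_le w (a := w i) (b := 1) le_rfl hpos'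
      have hterm : pkTerm w (w i) 1 = cntLt w 1 + 1 + (w i - 1) := rfl
      omega
    have hle2 : pkF w (w i) ≤ X := by
      obtain ⟨i', hi', he⟩ := infB_exists _ j
      have he' : X = 1 + i' + (w i - v.getD i' 0) := he
      have hi'len : i' < v.length := by omega
      set b := v.getD i' 0 with hb
      have hb1 : 1 ≤ b := by
        have : b ∈ v := by
          rw [hb, List.getD_eq_getElem _ _ hi'len]; exact List.getElem_mem _
        exact hvpos _ this
      have hbwi : b ≤ w i := by
        have := sorted_getD_mono hsort hi' hjlen; omega
      have hcnt : cntLt w b ≤ i' := by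
        have := (sorted_count hsort b hi'len).not
        rw [hcount] at this
        omega
      have h2 := pkF_le w hb1 hbwi
      have hterm : pkTerm w (w i) b = cntLt w b + 1 + (w i - b) := rfl
      omega
    omega


section PkLemmas
variable {n : ℕ} (w : Fin n → ℕ)

lemma pkTerm_def {a b : ℕ} : pkTerm w a b = cntLt w b + 1 + (a - b) := rfl

lemma cntLt_mono {b b' : ℕ} (h : b ≤ b') : cntLt w b ≤ cntLt w b' := by
  apply Finset.card_le_card
  intro l hl
  simp at hl ⊢; omega

lemma cntLt_one (hpos : ∀ j, 1 ≤ w j) : cntLt w 1 = 0 := by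
  rw [cntLt, Finset.card_eq_zero, Finset.filter_eq_empty_iff]
  intro l _
  have := hpos l; omega

lemma cntLt_lt_of_val {a : ℕ} (hval : ∃ i, w i = a) :
    cntLt w a < cntLt w (a + 1) := by
  obtain ⟨i, rfl⟩ := hval
  apply Finset.card_lt_card
  rw [Finset.ssubset_iff_of_subset (by intro l hl; simp at hl ⊢; omega)]
  exact ⟨i, by simp, by simp⟩

lemma pkF_pos {a : ℕ} (ha : 1 ≤ a) : 1 ≤ pkF w a := by
  obtain ⟨b, _, _, he⟩ := pkF_exists w ha
  rw [he, pkTerm_def]; omega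

lemma pkF_le_self (hpos : ∀ j, 1 ≤ w j) {a : ℕ} (ha : 1 ≤ a) : pkF w a ≤ a := by
  have := pkF_le w (a := a) (b := 1) le_rfl ha
  rw [pkTerm_def, cntLt_one w hpos] at this
  omega

lemma pkF_mono {a a' : ℕ} (ha : 1 ≤ a) (h : a ≤ a') : pkF w a ≤ pkF w a' := by
  obtain ⟨b', hb1, hba, he⟩ := pkF_exists w (a := a') (by omega)
  rcases le_or_gt b' a with hc | hc
  · have := pkF_le w (a := a) hb1 hc
    rw [pkTerm_def] at this he
    omega
  · have h1 := pkF_le w (a := a) ha le_rfl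
    have h2 := cntLt_mono w (show a ≤ b' by omega)
    rw [pkTerm_def] at h1 he
    omega

lemma pkF_lt {a a' : ℕ} (ha : 1 ≤ a) (hval : ∃ i, w i = a) (h : a < a') :
    pkF w a < pkF w a' := by
  obtain ⟨b', hb1, hba, he⟩ := pkF_exists w (a := a') (by omega)
  rcases le_or_gt b' a with hc | hc
  · have := pkF_le w (a := a) hb1 hc
    rw [pkTerm_def] at this he
    omega
  · have h1 := pkF_le w (a := a) ha le_rfl
    have h2 := cntLt_lt_of_val w hval
    have h3 := cntLt_mono w (show a + 1 ≤ b' by omega)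
    rw [pkTerm_def] at h1 he
    omega

lemma pkF_sub {a a' : ℕ} (ha : 1 ≤ a) (h : a ≤ a') :
    pkF w a' ≤ pkF w a + (a' - a) := by
  obtain ⟨b, hb1, hba, he⟩ := pkF_exists w ha
  have := pkF_le w (a := a') hb1 (by omega)
  rw [pkTerm_def] at this he
  omega

lemma pkF_value_min {a : ℕ} (hval : ∃ i, w i = a) (ha : 1 ≤ a) :
    ∃ β, (∃ i, w i = β) ∧ 1 ≤ β ∧ β ≤ a ∧ pkF w a = pkTerm w a β := by
  obtain ⟨b, hb1, hba, he⟩ := pkF_exists w ha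
  have hSne : ((Finset.univ.image w).filter (fun x => b ≤ x ∧ x ≤ a)).Nonempty := by
    obtain ⟨i, hi⟩ := hval
    refine ⟨a, ?_⟩
    rw [Finset.mem_filter, Finset.mem_image]
    exact ⟨⟨i, Finset.mem_univ i, hi⟩, hba, le_rfl⟩
  set β := ((Finset.univ.image w).filter (fun x => b ≤ x ∧ x ≤ a)).min' hSne with hβ
  have hβS := Finset.min'_mem _ hSne
  rw [← hβ] at hβS
  rw [Finset.mem_filter, Finset.mem_image] at hβS
  obtain ⟨⟨i, _, hiβ⟩, hbβ, hβa⟩ := hβS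
  have hcnt : cntLt w β = cntLt w b := by
    unfold cntLt
    congr 1
    apply Finset.filter_congr
    intro l _
    constructor
    · intro hl
      by_contra hc
      push_neg at hc
      have hmem : w l ∈ (Finset.univ.image w).filter (fun x => b ≤ x ∧ x ≤ a) := by
        rw [Finset.mem_filter, Finset.mem_image]
        exact ⟨⟨l, Finset.mem_univ l, rfl⟩, hc, by omega⟩
      have := Finset.min'_le _ _ hmem
      omega
    · intro hl; omega
  have hle := pkF_le w (a := a) (show 1 ≤ β by omega) hβa
  rw [pkTerm_def] at he hle
  exact ⟨β, ⟨i, hiβ⟩, by omega, hβa, by rw [pkTerm_def]; omega⟩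

end PkLemmas

section Comp
variable {m n : ℕ} (w : Fin n → ℕ) (e : Fin m → Fin n)

lemma cnt_split {b b' : ℕ} (h : b ≤ b') {N : ℕ} (x : Fin N → ℕ) :
    cntLt x b' = cntLt x b + (Finset.univ.filter (fun l => b ≤ x l ∧ x l < b')).card := by
  unfold cntLt
  rw [← Finset.card_union_of_disjoint]
  · congr 1
    ext l
    simp only [Finset.mem_union, Finset.mem_filter, Finset.mem_univ, true_and]
    omega
  · rw [Finset.disjoint_filter]
    intro l _ hl
    simp; omega

lemma cntLt_comp_add_le (he : Function.Injective e) {b b' : ℕ} (h : b ≤ b') :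
    cntLt (fun l => w (e l)) b' + cntLt w b ≤ cntLt (fun l => w (e l)) b + cntLt w b' := by
  rw [cnt_split h (fun l => w (e l)), cnt_split h w]
  have : (Finset.univ.filter (fun l => b ≤ w (e l) ∧ w (e l) < b')).card
      ≤ (Finset.univ.filter (fun l => b ≤ w l ∧ w l < b')).card := by
    apply Finset.card_le_card_of_injOn e
    · intro l hl
      simp at hl ⊢; exact hl
    · exact fun a _ b _ hab => he hab
  omega

lemma pkF_parkize_comp (hpos : ∀ j, 1 ≤ w j) (he : Function.Injective e) (i : Fin m) :
    pkF (fun l => pkF w (w (e l))) (pkF w (w (e i))) = pkF (fun l => w (e l)) (w (e i)) := by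
  set a := w (e i) with ha
  set x : Fin m → ℕ := fun l => w (e l) with hx
  set y : Fin m → ℕ := fun l => pkF w (w (e l)) with hy
  have hxl : ∀ l, x l = w (e l) := fun l => rfl
  have hyl : ∀ l, y l = pkF w (x l) := fun l => rfl
  have hxi : x i = a := rfl
  have ha1 : 1 ≤ a := hpos _
  have hposx : ∀ l, 1 ≤ x l := fun l => hpos _
  have hd : ∀ β : ℕ, 1 ≤ β → (∃ l, w l = β) → cntLt y (pkF w β) = cntLt x β := by
    intro β hβ1 hβv
    unfold cntLt
    congr 1
    apply Finset.filter_congr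
    intro l _
    rw [hyl l]
    constructor
    · intro hl
      by_contra hc
      push_neg at hc
      exact absurd (pkF_mono w hβ1 hc) (by omega)
    · intro hl
      exact pkF_lt w (hposx l) ⟨e l, (hxl l).symm⟩ hl
  apply le_antisymm
  · obtain ⟨β, hβv, hβ1, hβa, he2⟩ := pkF_value_min x ⟨i, hxi⟩ ha1
    obtain ⟨l0, hl0⟩ := hβv
    have hFβ1 : 1 ≤ pkF w β := pkF_pos w hβ1
    have hFβa : pkF w β ≤ pkF w a := pkF_mono w hβ1 hβa
    have h1 := pkF_le y (a := pkF w a) hFβ1 hFβa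
    have h2 := hd β hβ1 ⟨e l0, by rw [← hxl l0, hl0]⟩
    have h3 := pkF_sub w hβ1 hβa
    rw [pkTerm_def] at h1 he2
    omega
  · have hFa1 : 1 ≤ pkF w a := pkF_pos w ha1
    obtain ⟨γ, hγv, hγ1, hγFa, he2⟩ := pkF_value_min y (a := pkF w a) ⟨i, rfl⟩ hFa1
    obtain ⟨l0, hl0⟩ := hγv
    rw [hyl l0] at hl0
    have hβ1 : 1 ≤ x l0 := hposx l0
    have hβa : x l0 ≤ a := by
      by_contra hc
      push_neg at hc
      have h0 := pkF_lt w ha1 ⟨e i, hxi⟩ hc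
      rw [hl0] at h0
      omega
    have hd2 : cntLt y γ = cntLt x (x l0) := by
      rw [← hl0]; exact hd (x l0) hβ1 ⟨e l0, (hxl l0).symm⟩
    obtain ⟨bs, hbs1, hbsa, hebs⟩ := pkF_exists w ha1
    have hFβle : pkF w (x l0) ≤ cntLt w (x l0) + 1 := by
      have := pkF_le w (a := x l0) hβ1 le_rfl
      rw [pkTerm_def] at this
      omega
    have hRHS := pkF_le x (a := a) hβ1 hβa
    rcases le_or_gt bs (x l0) with hc | hc
    · have h4 := pkF_le w (a := x l0) hbs1 hc
      rw [pkTerm_def] at he2 hebs h4 hRHS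
      rw [← hl0] at he2 hd2
      omega
    · have h5 := pkF_le x (a := a) hbs1 hbsa
      have h6 := cntLt_comp_add_le w e he (show x l0 ≤ bs by omega)
      have h7 := cntLt_mono w (show x l0 ≤ bs by omega)
      have h8 : pkF w (x l0) ≤ pkF w a := by rw [← hl0] at hγFa; exact hγFa
      rw [pkTerm_def] at he2 hebs h5 hRHS
      rw [← hl0] at he2 hd2
      have hg1 : cntLt (fun l => w (e l)) (x l0) = cntLt x (x l0) := rfl
      have hg2 : cntLt (fun l => w (e l)) bs = cntLt x bs := rfl
      omega

section Parkize
variable {m n : ℕ} (w : Fin n → ℕ)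

lemma parkize_pos (hpos : ∀ j, 1 ≤ w j) (i : Fin n) : 1 ≤ parkize w i := by
  rw [parkize_eq w hpos i]; exact pkF_pos w (hpos i)

lemma parkize_parkize_comp (hpos : ∀ j, 1 ≤ w j) (e : Fin m → Fin n)
    (he : Function.Injective e) :
    parkize (fun l => parkize w (e l)) = parkize (fun l => w (e l)) := by
  funext i
  have h1 : (fun l => parkize w (e l)) = fun l => pkF w (w (e l)) :=
    funext fun l => parkize_eq w hpos (e l)
  rw [h1, parkize_eq _ (fun l => pkF_pos w (hpos (e l))) i,
    parkize_eq _ (fun l => hpos (e l)) i]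
  exact pkF_parkize_comp w e hpos he i

lemma parkize_le_iff (hpos : ∀ j, 1 ≤ w j) (i j : Fin n) :
    parkize w i ≤ parkize w j ↔ w i ≤ w j := by
  rw [parkize_eq w hpos i, parkize_eq w hpos j]
  constructor
  · intro h
    by_contra hc
    push_neg at hc
    exact absurd (pkF_lt w (hpos j) ⟨j, rfl⟩ hc) (by omega)
  · exact fun h => pkF_mono w (hpos i) h

lemma parkize_sufW_parkize (hpos : ∀ j, 1 ≤ w j) (j : ℕ) :
    parkize (sufW (parkize w) j) = parkize (sufW w j) := by
  have := parkize_parkize_comp w hpos (fun i : Fin (n - j) => (⟨j + i.1, by omega⟩ : Fin n))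
    (fun a b hab => by
      simp only [Fin.mk.injEq] at hab
      exact Fin.ext (by omega))
  exact this

lemma parkize_preW_parkize (hpos : ∀ j, 1 ≤ w j) (j : ℕ) :
    parkize (preW (parkize w) j) = parkize (preW w j) := by
  have := parkize_parkize_comp w hpos (fun i : Fin (min j n) => (⟨i.1, by omega⟩ : Fin n))
    (fun a b hab => by
      simp only [Fin.mk.injEq] at hab
      exact Fin.ext hab)
  exact this

end Parkize

section MIdx
variable {n : ℕ} (w : Fin n → ℕ)

lemma mIdx_le_sub_one : mIdx w ≤ n - 1 := by
  apply csSup_le'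
  rintro i ⟨h, -⟩
  omega

lemma mIdx_spec (hn : n ≠ 0) : ∃ h : mIdx w < n, ∀ j, w j ≤ w ⟨mIdx w, h⟩ := by
  have : Nonempty (Fin n) := ⟨⟨0, by omega⟩⟩
  have hne : {i : ℕ | ∃ h : i < n, ∀ j, w j ≤ w ⟨i, h⟩}.Nonempty := by
    obtain ⟨i0, hi0⟩ := Finite.exists_max w
    exact ⟨i0.1, i0.2, fun j => by simpa [Fin.eta] using hi0 j⟩
  have hbdd : BddAbove {i : ℕ | ∃ h : i < n, ∀ j, w j ≤ w ⟨i, h⟩} :=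
    ⟨n, fun x hx => le_of_lt hx.1⟩
  exact Nat.sSup_mem hne hbdd

lemma le_mIdx {i : ℕ} (h : i < n) (hmax : ∀ j, w j ≤ w ⟨i, h⟩) : i ≤ mIdx w :=
  le_csSup ⟨n, fun x hx => le_of_lt hx.1⟩ ⟨h, hmax⟩

lemma mIdx_congr (u : Fin n → ℕ) (hiff : ∀ i j, u i ≤ u j ↔ w i ≤ w j) :
    mIdx u = mIdx w := by
  unfold mIdx
  congr 1
  ext i
  constructor
  · rintro ⟨h, hmax⟩; exact ⟨h, fun j => (hiff j ⟨i, h⟩).1 (hmax j)⟩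
  · rintro ⟨h, hmax⟩; exact ⟨h, fun j => (hiff j ⟨i, h⟩).2 (hmax j)⟩

lemma mIdx_parkize (hpos : ∀ j, 1 ≤ w j) : mIdx (parkize w) = mIdx w :=
  mIdx_congr w (parkize w) (fun i j => parkize_le_iff w hpos i j)

lemma mIdx_sufW (hn : n ≠ 0) {k : ℕ} (hk : k ≤ mIdx w) :
    mIdx (sufW w k) = mIdx w - k := by
  obtain ⟨hmn, hmax⟩ := mIdx_spec w hn
  set m := mIdx w with hm
  apply le_antisymm
  · apply csSup_le'
    rintro i ⟨h, hmaxs⟩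
    have h1 : ∀ j, w j ≤ w ⟨k + i, by omega⟩ := by
      intro j
      have h2 := hmaxs ⟨m - k, by omega⟩
      have h3 : sufW w k ⟨m - k, by omega⟩ = w ⟨m, hmn⟩ := by
        show w _ = w _
        congr 1
        exact Fin.ext (by simp; omega)
      have h4 : sufW w k ⟨i, h⟩ = w ⟨k + i, by omega⟩ := rfl
      rw [h3, h4] at h2
      exact le_trans (hmax j) h2
    have := le_mIdx w (by omega) h1
    omega
  · exact le_mIdx (sufW w k) (by omega) (fun j => by
      show w _ ≤ w _
      have : (⟨k + (m - k), by omega⟩ : Fin n) = ⟨m, hmn⟩ := Fin.ext (by simp; omega)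
      rw [this]
      exact hmax _)

lemma mIdx_preW (hn : n ≠ 0) {k : ℕ} (hk : mIdx w < k) (hkn : k ≤ n) :
    mIdx (preW w k) = mIdx w := by
  obtain ⟨hmn, hmax⟩ := mIdx_spec w hn
  set m := mIdx w with hm
  apply le_antisymm
  · apply csSup_le'
    rintro i ⟨h, hmaxs⟩
    have h1 : ∀ j, w j ≤ w ⟨i, by omega⟩ := by
      intro j
      have h2 := hmaxs ⟨m, by omega⟩
      have h3 : preW w k ⟨m, by omega⟩ = w ⟨m, hmn⟩ := rfl
      have h4 : preW w k ⟨i, h⟩ = w ⟨i, by omega⟩ := rfl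
      rw [h3, h4] at h2
      exact le_trans (hmax j) h2
    exact le_mIdx w (by omega) h1
  · exact le_mIdx (preW w k) (by omega) (fun j => by
      show w _ ≤ w _
      exact le_trans (le_of_eq (by congr 1)) (hmax ⟨j.1, by omega⟩))

end MIdx

/- ## machinery -/
lemma W_mk_eq {a b : ℕ} (f : Fin a → ℕ) (g : Fin b → ℕ) (h : a = b)
    (hfg : ∀ (i : ℕ) (hia : i < a) (hib : i < b), f ⟨i, hia⟩ = g ⟨i, hib⟩) :
    (⟨a, parkize f⟩ : W) = ⟨b, parkize g⟩ := by
  subst h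
  have : f = g := funext fun i => by
    have := hfg i.1 i.2 i.2
    simpa [Fin.eta] using this
  rw [this]

lemma dPrec_mk (a : ℕ) (w : Fin a → ℕ) : dPrec ⟨a, w⟩
    = ∑ k ∈ Finset.Icc 1 (mIdx w),
      Finsupp.single (α := W × W) ((⟨a - k, parkize (sufW w k)⟩ : W),
        (⟨min k a, parkize (preW w k)⟩ : W)) 1 := rfl

lemma dSucc_mk (a : ℕ) (w : Fin a → ℕ) : dSucc ⟨a, w⟩
    = ∑ k ∈ Finset.Icc (mIdx w + 1) (a - 1),
      Finsupp.single (α := W × W) ((⟨a - k, parkize (sufW w k)⟩ : W),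
        (⟨min k a, parkize (preW w k)⟩ : W)) 1 := rfl

lemma dFull_mk (a : ℕ) (w : Fin a → ℕ) : dFull ⟨a, w⟩
    = ∑ k ∈ Finset.Icc 1 (a - 1),
      Finsupp.single (α := W × W) ((⟨a - k, parkize (sufW w k)⟩ : W),
        (⟨min k a, parkize (preW w k)⟩ : W)) 1 := by
  have hm := mIdx_le_sub_one w
  have h1 : ∀ b : ℕ, Finset.Icc 1 b = Finset.Ioc 0 b := fun b => Finset.Icc_add_one_left_eq_Ioc 0 b
  rw [show dFull ⟨a, w⟩ = dPrec ⟨a, w⟩ + dSucc ⟨a, w⟩ from rfl, dPrec_mk, dSucc_mk,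
    h1, Finset.Icc_add_one_left_eq_Ioc (mIdx w) (a - 1), h1]
  exact Finset.sum_Ioc_consecutive _ (Nat.zero_le _) hm

lemma applyLeft_sum (D : W → (W × W) →₀ ℚ) (s : Finset ℕ) (p : ℕ → W × W) :
    applyLeft D (∑ k ∈ s, Finsupp.single (p k) 1)
      = ∑ k ∈ s, (D (p k).1).sum (fun q d => Finsupp.single (q.1, q.2, (p k).2) d) := by
  rw [applyLeft, ← Finsupp.sum_finset_sum_index]
  · refine Finset.sum_congr rfl fun k _ => ?_
    rw [Finsupp.sum_single_index]
    · simp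
    · simp
  · intro p'
    simp
  · intro p' b1 b2
    simp [add_mul, Finsupp.single_add, Finsupp.sum_add]

lemma applyRight_sum (D : W → (W × W) →₀ ℚ) (s : Finset ℕ) (p : ℕ → W × W) :
    applyRight D (∑ k ∈ s, Finsupp.single (p k) 1)
      = ∑ k ∈ s, (D (p k).2).sum (fun q d => Finsupp.single ((p k).1, q.1, q.2) d) := by
  rw [applyRight, ← Finsupp.sum_finset_sum_index]
  · refine Finset.sum_congr rfl fun k _ => ?_
    rw [Finsupp.sum_single_index]
    · simp
    · simp
  · intro p'
    simp
  · intro p' b1 b2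
    simp [add_mul, Finsupp.single_add, Finsupp.sum_add]

lemma sum_singles_sum (t : Finset ℕ) (q : ℕ → W × W) (g : W × W → W × W × W) :
    (∑ j ∈ t, Finsupp.single (q j) (1:ℚ)).sum (fun r d => Finsupp.single (g r) d)
      = ∑ j ∈ t, Finsupp.single (g (q j)) 1 := by
  rw [← Finsupp.sum_finset_sum_index]
  · refine Finset.sum_congr rfl fun j _ => ?_
    rw [Finsupp.sum_single_index] <;> simp
  · intro r; simp
  · intro r b1 b2; simp [Finsupp.single_add]


section Assembly
variable {n : ℕ} (σ : Fin n → ℕ)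

/-- canonical triple term: suffix from `k`, middle `[j,k)`, prefix up to `j`. -/
noncomputable def Tt (j k : ℕ) : (W × W × W) →₀ ℚ :=
  Finsupp.single ((⟨n - k, parkize (sufW σ k)⟩ : W),
    (⟨min k n - j, parkize (sufW (preW σ k) j)⟩ : W),
    (⟨min j n, parkize (preW σ j)⟩ : W)) 1

lemma Tt_def (j k : ℕ) : Tt σ j k
    = Finsupp.single ((⟨n - k, parkize (sufW σ k)⟩ : W),
      (⟨min k n - j, parkize (sufW (preW σ k) j)⟩ : W),
      (⟨min j n, parkize (preW σ j)⟩ : W)) 1 := rfl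

lemma compSuf (hpos : ∀ j, 1 ≤ σ j) (k j : ℕ) (hkn : k + j ≤ n) :
    (⟨(n - k) - j, parkize (sufW (parkize (sufW σ k)) j)⟩ : W)
      = ⟨n - (k + j), parkize (sufW σ (k + j))⟩ := by
  rw [parkize_sufW_parkize (sufW σ k) (fun l => hpos _) j]
  refine W_mk_eq _ _ (by omega) (fun i hia hib => ?_)
  show σ _ = σ _
  congr 1
  exact Fin.ext (by simp; omega)

lemma compMid (hpos : ∀ j, 1 ≤ σ j) (k j : ℕ) (hkn : k + j ≤ n) :
    (⟨min j (n - k), parkize (preW (parkize (sufW σ k)) j)⟩ : W)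
      = ⟨min (k + j) n - k, parkize (sufW (preW σ (k + j)) k)⟩ := by
  rw [parkize_preW_parkize (sufW σ k) (fun l => hpos _) j]
  exact W_mk_eq _ _ (by omega) (fun i hia hib => rfl)

lemma compPre (hpos : ∀ j, 1 ≤ σ j) (j k : ℕ) (hjk : j ≤ k) :
    (⟨min j (min k n), parkize (preW (parkize (preW σ k)) j)⟩ : W)
      = ⟨min j n, parkize (preW σ j)⟩ := by
  rw [parkize_preW_parkize (preW σ k) (fun l => hpos _) j]
  exact W_mk_eq _ _ (by omega) (fun i hia hib => rfl)

lemma compMid' (hpos : ∀ j, 1 ≤ σ j) (j k : ℕ) :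
    (⟨min k n - j, parkize (sufW (parkize (preW σ k)) j)⟩ : W)
      = ⟨min k n - j, parkize (sufW (preW σ k) j)⟩ := by
  rw [parkize_sufW_parkize (preW σ k) (fun l => hpos _) j]

lemma sum_shift {M : Type*} [AddCommMonoid M] (k a b : ℕ) (f : ℕ → M) :
    ∑ j ∈ Finset.Icc a b, f (k + j) = ∑ l ∈ Finset.Icc (k + a) (k + b), f l := by
  rw [← Finset.map_add_left_Icc, Finset.sum_map]
  rfl

end Assembly

/-- On the augmentation ideal of `PQSym^cop`, the splitting of the reduced
coopposite coproduct at `m_σ` is a dendriform coalgebra structure. -/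
theorem PQSym_dendriform_coalgebra {n : ℕ} (hn : n ≠ 0) (σ : Fin n → ℕ)
    (hσ : IsPark σ) :
    dPrec ⟨n, σ⟩ + dSucc ⟨n, σ⟩
      = ∑ k ∈ Finset.Icc 1 (n - 1),
          Finsupp.single ((⟨n - k, parkize (sufW σ k)⟩ : W),
            (⟨min k n, parkize (preW σ k)⟩ : W)) 1 ∧
    applyLeft dPrec (dPrec ⟨n, σ⟩) = applyRight dFull (dPrec ⟨n, σ⟩) ∧
    applyLeft dSucc (dPrec ⟨n, σ⟩) = applyRight dPrec (dSucc ⟨n, σ⟩) ∧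
    applyLeft dFull (dSucc ⟨n, σ⟩) = applyRight dSucc (dSucc ⟨n, σ⟩) := by
  obtain ⟨hpos, -⟩ := hσ
  obtain ⟨hmn, hmax⟩ := mIdx_spec σ hn
  have hposS : ∀ k : ℕ, ∀ l, 1 ≤ sufW σ k l := fun k l => hpos _
  have hposP : ∀ k : ℕ, ∀ l, 1 ≤ preW σ k l := fun k l => hpos _
  have hA : ∀ k : ℕ, k ≤ mIdx σ → mIdx (parkize (sufW σ k)) = mIdx σ - k :=
    fun k h2 => by rw [mIdx_parkize (sufW σ k) (hposS k), mIdx_sufW σ hn h2]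
  have hB : ∀ k : ℕ, mIdx σ < k → k ≤ n - 1 → mIdx (parkize (preW σ k)) = mIdx σ :=
    fun k h1 h2 => by rw [mIdx_parkize (preW σ k) (hposP k), mIdx_preW σ hn h1 (by omega)]
  refine ⟨dFull_mk n σ, ?_, ?_, ?_⟩
  · -- axiom 1
    rw [dPrec_mk n σ, applyLeft_sum, applyRight_sum]
    trans (∑ k ∈ Finset.Icc 1 (mIdx σ), ∑ l ∈ Finset.Icc (k+1) (mIdx σ), Tt σ k l)
    · refine Finset.sum_congr rfl fun k hk => ?_
      rw [Finset.mem_Icc] at hk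
      dsimp only
      rw [dPrec_mk, hA k hk.2, sum_singles_sum]
      trans (∑ j ∈ Finset.Icc 1 (mIdx σ - k), Tt σ k (k + j))
      · refine Finset.sum_congr rfl fun j hj => ?_
        rw [Finset.mem_Icc] at hj
        dsimp only
        rw [Tt_def, compSuf σ hpos k j (by omega), compMid σ hpos k j (by omega)]
        rfl
      · rw [sum_shift k 1 (mIdx σ - k) (fun l => Tt σ k l),
          show k + (mIdx σ - k) = mIdx σ from by omega]
    trans (∑ l ∈ Finset.Icc 1 (mIdx σ), ∑ k ∈ Finset.Icc 1 (l-1), Tt σ k l)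
    · exact Finset.sum_comm' (fun x y => by simp [Finset.mem_Icc]; omega)
    · symm
      refine Finset.sum_congr rfl fun k hk => ?_
      rw [Finset.mem_Icc] at hk
      dsimp only
      rw [dFull_mk, sum_singles_sum]
      refine Finset.sum_congr (by rw [min_eq_left (show k ≤ n by omega)]) fun j hj => ?_
      rw [Finset.mem_Icc] at hj
      dsimp only
      rw [Tt_def, compMid' σ hpos j k, compPre σ hpos j k (by omega)]
      rfl
  · -- axiom 2
    rw [dPrec_mk n σ, dSucc_mk n σ, applyLeft_sum, applyRight_sum]
    trans (∑ k ∈ Finset.Icc 1 (mIdx σ), ∑ l ∈ Finset.Icc (mIdx σ + 1) (n - 1), Tt σ k l)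
    · refine Finset.sum_congr rfl fun k hk => ?_
      rw [Finset.mem_Icc] at hk
      dsimp only
      rw [dSucc_mk, hA k hk.2, sum_singles_sum]
      trans (∑ j ∈ Finset.Icc (mIdx σ - k + 1) (n - k - 1), Tt σ k (k + j))
      · refine Finset.sum_congr rfl fun j hj => ?_
        rw [Finset.mem_Icc] at hj
        dsimp only
        rw [Tt_def, compSuf σ hpos k j (by omega), compMid σ hpos k j (by omega)]
        rfl
      · rw [sum_shift k (mIdx σ - k + 1) (n - k - 1) (fun l => Tt σ k l),
          show k + (mIdx σ - k + 1) = mIdx σ + 1 from by omega,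
          show k + (n - k - 1) = n - 1 from by omega]
    trans (∑ l ∈ Finset.Icc (mIdx σ + 1) (n - 1), ∑ k ∈ Finset.Icc 1 (mIdx σ), Tt σ k l)
    · exact Finset.sum_comm
    · symm
      refine Finset.sum_congr rfl fun k hk => ?_
      rw [Finset.mem_Icc] at hk
      dsimp only
      rw [dPrec_mk, hB k (by omega) (by omega), sum_singles_sum]
      refine Finset.sum_congr rfl fun j hj => ?_
      rw [Finset.mem_Icc] at hj
      dsimp only
      rw [Tt_def, compMid' σ hpos j k, compPre σ hpos j k (by omega)]
      rfl
  · -- axiom 3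
    rw [dSucc_mk n σ, applyLeft_sum, applyRight_sum]
    trans (∑ k ∈ Finset.Icc (mIdx σ + 1) (n - 1), ∑ l ∈ Finset.Icc (k+1) (n - 1), Tt σ k l)
    · refine Finset.sum_congr rfl fun k hk => ?_
      rw [Finset.mem_Icc] at hk
      dsimp only
      rw [dFull_mk, sum_singles_sum]
      trans (∑ j ∈ Finset.Icc 1 (n - k - 1), Tt σ k (k + j))
      · refine Finset.sum_congr rfl fun j hj => ?_
        rw [Finset.mem_Icc] at hj
        dsimp only
        rw [Tt_def, compSuf σ hpos k j (by omega), compMid σ hpos k j (by omega)]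
        rfl
      · rw [sum_shift k 1 (n - k - 1) (fun l => Tt σ k l),
          show k + (n - k - 1) = n - 1 from by omega]
    trans (∑ l ∈ Finset.Icc (mIdx σ + 1) (n - 1), ∑ k ∈ Finset.Icc (mIdx σ + 1) (l - 1), Tt σ k l)
    · exact Finset.sum_comm' (fun x y => by simp [Finset.mem_Icc]; omega)
    · symm
      refine Finset.sum_congr rfl fun k hk => ?_
      rw [Finset.mem_Icc] at hk
      dsimp only
      rw [dSucc_mk, hB k (by omega) (by omega), sum_singles_sum]
      refine Finset.sum_congr (by rw [min_eq_left (show k ≤ n by omega)]) fun j hj => ?_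
      rw [Finset.mem_Icc] at hj
      dsimp only
      rw [Tt_def, compMid' σ hpos j k, compPre σ hpos j k (by omega)]
      rfl
end Comp
end
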